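/- arXiv:1903.08555 — 6 statements merged into one kernel-verified Lean document; each statement's English description precedes it below -/
import Mathlib

section
/- For the nonlinear compartmental ODE system dy_0/dt = -(λ̄_0(y)+μ̄_0(y)) y_0, dy_1/dt = λ̄_0(y) y_0 - (λ_1(y)+μ_1(y)) y_1, dy_i/dt = λ_{i-1}(y) y_{i-1} - (λ_i(y)+μ_i(y)) y_i for i=2,…,d, any nonnegative initial data y^{in} ∈ ℝ_+^{d+1} gives rise to a unique solution defined for all t ≥ 0; this solution has all components nonnegative for all times, the total population t ↦ Σ_{i=0}^d y_i(t) is nonincreasing (its derivative equals -μ̄_0(y(t)) y_0(t) - Σ_{i=1}^d μ_i(y(t)) y_i(t) ≤ 0), and consequently every component y_i is globally bounded. -/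
set_option autoImplicit false

open scoped BigOperators

/-- Generic maturation rate `λᵢ(y) = fᵢ / (1 + Kᵢ ∑_{j=1}^d wⱼ yⱼ)`. -/
noncomputable def lamGen (d : ℕ) (fi Ki : ℝ) (w : ℕ → ℝ) (y : ℕ → ℝ) : ℝ :=
  fi / (1 + Ki * ∑ j ∈ Finset.Icc 1 d, w j * y j)

/-- Generic death rate `μᵢ(y) = gᵢ (1 + Kᵢ ∑_{j=1}^d wⱼ yⱼ)`. -/
noncomputable def muGen (d : ℕ) (gi Ki : ℝ) (w : ℕ → ℝ) (y : ℕ → ℝ) : ℝ :=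
  gi * (1 + Ki * ∑ j ∈ Finset.Icc 1 d, w j * y j)

/-- Right hand side of the nonlinear compartmental ODE system. -/
noncomputable def rhsODE (d : ℕ) (f0 g0 K10 K20 : ℝ) (f g K1 K2 : ℕ → ℝ)
    (a b w1 w2 : ℕ → ℝ) (y : ℕ → ℝ) : ℕ → ℝ := fun i =>
  if i = 0 then
    -(lamGen d f0 K10 a y + muGen d g0 K20 b y) * y 0
  else if i = 1 then
    lamGen d f0 K10 a y * y 0
      - (lamGen d (f 1) (K1 1) w1 y + muGen d (g 1) (K2 1) w2 y) * y 1
  else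
    lamGen d (f (i - 1)) (K1 (i - 1)) w1 y * y (i - 1)
      - (lamGen d (f i) (K1 i) w1 y + muGen d (g i) (K2 i) w2 y) * y i

/-!
The vector field is `C¹` wherever the denominators `1 + K ∑ wⱼ yⱼ` are positive, in particular
near the nonnegative orthant, so two solutions agree as long as one of them stays in the orthant.

For existence, cut the field off outside the box `[0, M]^{d+1}` with `M = ∑ yᵢⁱⁿ`. The cut-off
field is globally Lipschitz and bounded, hence has a global solution, and it is quasi-positive
(`yᵢ ≤ 0` forces `dyᵢ/dt ≥ 0`), so this solution stays nonnegative. In `∑ᵢ dyᵢ/dt` the maturation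
fluxes `λᵢ yᵢ` telescope, the last one vanishing because `f_d = 0`, and only the death terms
`-μᵢ yᵢ ≤ 0` remain. Hence the total population does not increase, the solution never leaves the
box, and there it solves the original system.
-/

open Set Filter Topology
open scoped NNReal

section ODE

variable {E : Type*} [NormedAddCommGroup E] [NormedSpace ℝ E]

theorem LipschitzWith.exists_forall_hasDerivAt_of_norm_le [CompleteSpace E] {v : E → E}
    {K : ℝ≥0} (hv : LipschitzWith K v) {C : ℝ} (hC : ∀ x, ‖v x‖ ≤ C) (x₀ : E) :
    ∃ y : ℝ → E, y 0 = x₀ ∧ ∀ t, HasDerivAt y (v (y t)) t := by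
  have hloc (n : ℕ) : ∃ y : ℝ → E, y 0 = x₀ ∧
      ∀ t ∈ Ioo (-(n + 1 : ℝ)) (n + 1), HasDerivAt y (v (y t)) t := by
    have h0 : (0 : ℝ) ∈ Icc (-(n + 1 : ℝ)) (n + 1) := ⟨by linarith, by linarith⟩
    have hPL : IsPicardLindelof (fun _ => v) ⟨0, h0⟩ x₀ (C.toNNReal * (n + 1)) 0 C.toNNReal K :=
      { lipschitzOnWith := fun _ _ => hv.lipschitzOnWith
        continuousOn := fun _ _ => continuousOn_const
        norm_le := fun _ _ x _ => (hC x).trans (Real.le_coe_toNNReal C)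
        mul_max_le := by simp }
    obtain ⟨y, hy0, hy⟩ := hPL.exists_eq_forall_mem_Icc_hasDerivWithinAt₀
    exact ⟨y, hy0, fun t ht => (hy t (Ioo_subset_Icc_self ht)).hasDerivAt (Icc_mem_nhds ht.1 ht.2)⟩
  choose y hy0 hy using hloc
  have hagree (m n : ℕ) (t : ℝ) (hm : |t| < m + 1) (hn : |t| < n + 1) : y m t = y n t := by
    set r := min ((m : ℝ) + 1) (n + 1)
    have hsub (k : ℕ) (hk : r ≤ k + 1) : Ioo (-r) r ⊆ Ioo (-(k + 1 : ℝ)) (k + 1) :=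
      Ioo_subset_Ioo (neg_le_neg hk) hk
    have hr : 0 < r := lt_min (by positivity) (by positivity)
    refine ODE_solution_unique_of_mem_Ioo (v := fun _ => v) (s := fun _ => univ)
      (fun _ _ => hv.lipschitzOnWith) (t₀ := 0) ⟨neg_lt_zero.2 hr, hr⟩
      (fun s hs => ⟨hy m s (hsub m (min_le_left _ _) hs), trivial⟩)
      (fun s hs => ⟨hy n s (hsub n (min_le_right _ _) hs), trivial⟩) (by rw [hy0, hy0])
      (abs_lt.1 (lt_min hm hn))
  refine ⟨fun t => y ⌈|t|⌉₊ t, by simpa using hy0 0, fun t => ?_⟩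
  have hceil (s : ℝ) : |s| < ⌈|s|⌉₊ + 1 := (Nat.le_ceil _).trans_lt (lt_add_one _)
  have hnear : (fun s => y ⌈|s|⌉₊ s) =ᶠ[𝓝 t] y ⌈|t|⌉₊ := by
    filter_upwards [continuous_abs.continuousAt.eventually_lt continuousAt_const (hceil t)]
      with s hs using hagree _ _ s (hceil s) hs
  exact (hy _ t (abs_lt.1 (hceil t))).congr_of_eventuallyEq hnear

theorem eqOn_Ici_of_hasDerivAt_of_contDiffAt {v : E → E} {f g : ℝ → E} {a : ℝ}
    (hv : ∀ t ≥ a, ContDiffAt ℝ 1 v (f t)) (hf : ∀ t ≥ a, HasDerivAt f (v (f t)) t)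
    (hg : ∀ t ≥ a, HasDerivAt g (v (g t)) t) (ha : f a = g a) : EqOn f g (Ici a) := by
  have hcont {h : ℝ → E} (hh : ∀ t ≥ a, HasDerivAt h (v (h t)) t) {s : Set ℝ} (hs : s ⊆ Ici a) :
      ContinuousOn h s :=
    HasDerivAt.continuousOn fun t ht => hh t (hs ht)
  intro b hb
  refine IsClosed.Icc_subset_of_forall_mem_nhdsWithin (s := {t | f t = g t}) ?_ ha ?_ ⟨hb, le_rfl⟩
  · rw [inter_comm]
    exact ((hcont hf Icc_subset_Ici_self).prodMk (hcont hg Icc_subset_Ici_self))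
      |>.preimage_isClosed_of_isClosed isClosed_Icc isClosed_diagonal
  rintro x ⟨hfgx, hxa, -⟩
  obtain ⟨K, N, hN, hLip⟩ := (hv x hxa).exists_lipschitzOnWith
  have hfN : ∀ᶠ t in 𝓝 x, f t ∈ N := (hf x hxa).continuousAt hN
  have hgN : ∀ᶠ t in 𝓝 x, g t ∈ N := (hg x hxa).continuousAt (hfgx ▸ hN)
  obtain ⟨ε, hε, hεN⟩ := Metric.eventually_nhds_iff.1 (hfN.and hgN)
  have hIcc : Icc x (x + ε / 2) ⊆ Ici a := fun t ht => hxa.trans ht.1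
  have hclose : ∀ t ∈ Ico x (x + ε / 2), dist t x < ε := fun t ht => by
    rw [Real.dist_eq, abs_of_nonneg (by linarith [ht.1])]; linarith [ht.2]
  refine mem_of_superset (Icc_mem_nhdsGT (show x < x + ε / 2 by linarith)) fun t ht => ?_
  exact ODE_solution_unique_of_mem_Icc_right (v := fun _ => v) (s := fun _ => N) (fun _ _ => hLip)
    (hcont hf hIcc) (fun t ht => (hf t (hIcc (Ico_subset_Icc_self ht))).hasDerivWithinAt)
    (fun t ht => (hεN (hclose t ht)).1)
    (hcont hg hIcc) (fun t ht => (hg t (hIcc (Ico_subset_Icc_self ht))).hasDerivWithinAt)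
    (fun t ht => (hεN (hclose t ht)).2) hfgx ht

theorem IsCompact.exists_lipschitzOnWith_of_contDiffAt {F : Type*} [NormedAddCommGroup F]
    [NormedSpace ℝ F] {v : E → F} {s : Set E} (hs : IsCompact s)
    (hv : ∀ x ∈ s, ContDiffAt ℝ 1 v x) : ∃ K, LipschitzOnWith K v s :=
  LocallyLipschitzOn.exists_lipschitzOnWith_of_compact hs fun x hx =>
    let ⟨K, t, ht, hLip⟩ := (hv x hx).exists_lipschitzOnWith
    ⟨K, t, mem_nhdsWithin_of_mem_nhds ht, hLip⟩

end ODE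

theorem nonneg_of_hasDerivAt_of_neg_imp_deriv_nonneg {φ φ' : ℝ → ℝ} {a b : ℝ}
    (hφ : ∀ t ≥ a, HasDerivAt φ (φ' t) t) (hφ' : ∀ t ≥ a, φ t < 0 → 0 ≤ φ' t) (ha : 0 ≤ φ a)
    (hab : a ≤ b) : 0 ≤ φ b := by
  by_contra! hb
  have hcont : ContinuousOn φ (Icc a b) := HasDerivAt.continuousOn fun t ht => hφ t ht.1
  set S := Icc a b ∩ φ ⁻¹' Ici 0
  have hbdd : BddAbove S := ⟨b, fun t ht => ht.1.2⟩
  have hc : sSup S ∈ S := (hcont.preimage_isClosed_of_isClosed isClosed_Icc isClosed_Ici).csSup_mem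
    ⟨a, ⟨le_rfl, hab⟩, ha⟩ hbdd
  set c := sSup S
  -- `c` is the last time in `[a, b]` at which `φ` is nonnegative
  have hneg : ∀ t ∈ Ioo c b, φ t < 0 := fun t ht =>
    not_le.1 fun h => (le_csSup hbdd ⟨⟨hc.1.1.trans ht.1.le, ht.2.le⟩, h⟩).not_gt ht.1
  have hmono : MonotoneOn φ (Icc c b) := by
    refine monotoneOn_of_hasDerivWithinAt_nonneg (f' := φ') (convex_Icc c b)
      (hcont.mono (Icc_subset_Icc hc.1.1 le_rfl)) (fun t ht => ?_) (fun t ht => ?_) <;>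
      rw [interior_Icc] at ht
    · exact (hφ t (hc.1.1.trans ht.1.le)).hasDerivWithinAt
    · exact hφ' t (hc.1.1.trans ht.1.le) (hneg t ht)
  have := hmono ⟨le_rfl, hc.1.2⟩ ⟨hc.1.2, le_rfl⟩ hc.1.2
  linarith [show 0 ≤ φ c from hc.2]

theorem antitoneOn_Ici_of_hasDerivAt_nonpos {φ φ' : ℝ → ℝ} {a : ℝ}
    (hφ : ∀ t ≥ a, HasDerivAt φ (φ' t) t) (hφ' : ∀ t ≥ a, φ' t ≤ 0) : AntitoneOn φ (Ici a) := by
  refine antitoneOn_of_hasDerivWithinAt_nonpos (f' := φ') (convex_Ici a)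
    (HasDerivAt.continuousOn fun t ht => hφ t ht) (fun t ht => ?_) (fun t ht => ?_) <;>
    rw [interior_Ici] at ht
  · exact (hφ t ht.le).hasDerivWithinAt
  · exact hφ' t ht.le

section ClampBox

variable {ι : Type*}

def clampBox (M : ℝ) (x : ι → ℝ) : ι → ℝ := fun i => max 0 (min (x i) M)

theorem clampBox_mem_Icc {M : ℝ} (hM : 0 ≤ M) (x : ι → ℝ) :
    clampBox M x ∈ Icc 0 (fun _ => M) :=
  ⟨fun _ => le_max_left _ _, fun _ => max_le hM (min_le_right _ _)⟩

theorem clampBox_eq_self {M : ℝ} {x : ι → ℝ} (hx : x ∈ Icc 0 (fun _ => M)) : clampBox M x = x :=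
  funext fun i => by
    rw [clampBox, min_eq_left (hx.2 i), max_eq_right (show (0 : ℝ) ≤ x i from hx.1 i)]

theorem clampBox_apply_eq_zero {M : ℝ} {x : ι → ℝ} {i : ι} (hx : x i ≤ 0) : clampBox M x i = 0 :=
  max_eq_left ((min_le_left _ _).trans hx)

theorem lipschitzWith_clampBox [Fintype ι] (M : ℝ) : LipschitzWith 1 (clampBox (ι := ι) M) := by
  have hclamp : LipschitzWith 1 fun r : ℝ => max 0 (min r M) :=
    (LipschitzWith.id.min_const M).const_max 0
  refine LipschitzWith.of_dist_le_mul fun x y => ?_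
  rw [NNReal.coe_one, one_mul]
  refine (dist_pi_le_iff dist_nonneg).2 fun i => ?_
  simpa [clampBox] using
    (hclamp.dist_le_mul (x i) (y i)).trans (by simpa using dist_le_pi_dist x y i)

end ClampBox

section Sequences

variable {α : Type*} {n : ℕ}

/-- Indices beyond `n` wrap around modulo `n + 1`; they are never read. -/
def seqOfFin (x : Fin (n + 1) → α) : ℕ → α := fun j => x (Fin.ofNat (n + 1) j)

def finOfSeq (u : ℕ → α) : Fin (n + 1) → α := fun i => u i

theorem seqOfFin_finOfSeq (u : ℕ → α) {j : ℕ} (hj : j ≤ n) :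
    seqOfFin (n := n) (finOfSeq u) j = u j := by
  simp [seqOfFin, finOfSeq, Nat.mod_eq_of_lt (Nat.lt_succ_of_le hj)]

theorem seqOfFin_val (x : Fin (n + 1) → α) (i : Fin (n + 1)) : seqOfFin x i = x i := by
  simp [seqOfFin]

theorem seqOfFin_nonneg {x : Fin (n + 1) → ℝ} (hx : 0 ≤ x) (j : ℕ) : 0 ≤ seqOfFin x j :=
  hx _

@[fun_prop]
theorem contDiff_seqOfFin_apply {m : WithTop ℕ∞} (j : ℕ) :
    ContDiff ℝ m fun x : Fin (n + 1) → ℝ => seqOfFin x j :=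
  contDiff_apply ℝ ℝ _

end Sequences

section Rates

variable {d : ℕ} {c K : ℝ} {w x x' : ℕ → ℝ}

theorem one_le_one_add_mul_sum (hK : 0 ≤ K) (hw : ∀ j, 1 ≤ j → j ≤ d → 0 ≤ w j)
    (hx : ∀ j ≤ d, 0 ≤ x j) : 1 ≤ 1 + K * ∑ j ∈ Finset.Icc 1 d, w j * x j := by
  have : 0 ≤ ∑ j ∈ Finset.Icc 1 d, w j * x j := Finset.sum_nonneg fun j hj => by
    obtain ⟨h1, h2⟩ := Finset.mem_Icc.1 hj
    exact mul_nonneg (hw j h1 h2) (hx j h2)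
  nlinarith

theorem lamGen_nonneg (hc : 0 ≤ c) (hK : 0 ≤ K) (hw : ∀ j, 1 ≤ j → j ≤ d → 0 ≤ w j)
    (hx : ∀ j ≤ d, 0 ≤ x j) : 0 ≤ lamGen d c K w x :=
  div_nonneg hc (zero_le_one.trans (one_le_one_add_mul_sum hK hw hx))

theorem muGen_nonneg (hc : 0 ≤ c) (hK : 0 ≤ K) (hw : ∀ j, 1 ≤ j → j ≤ d → 0 ≤ w j)
    (hx : ∀ j ≤ d, 0 ≤ x j) : 0 ≤ muGen d c K w x :=
  mul_nonneg hc (zero_le_one.trans (one_le_one_add_mul_sum hK hw hx))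

theorem weighted_sum_congr (h : ∀ j ≤ d, x j = x' j) :
    ∑ j ∈ Finset.Icc 1 d, w j * x j = ∑ j ∈ Finset.Icc 1 d, w j * x' j :=
  Finset.sum_congr rfl fun j hj => by rw [h j (Finset.mem_Icc.1 hj).2]

theorem lamGen_congr (h : ∀ j ≤ d, x j = x' j) : lamGen d c K w x = lamGen d c K w x' := by
  rw [lamGen, lamGen, weighted_sum_congr h]

theorem muGen_congr (h : ∀ j ≤ d, x j = x' j) : muGen d c K w x = muGen d c K w x' := by
  rw [muGen, muGen, weighted_sum_congr h]

theorem contDiffAt_lamGen_seqOfFin {n : ℕ} {x : Fin (n + 1) → ℝ}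
    (hx : 1 + K * ∑ j ∈ Finset.Icc 1 d, w j * seqOfFin x j ≠ 0) :
    ContDiffAt ℝ 1 (fun y : Fin (n + 1) → ℝ => lamGen d c K w (seqOfFin y)) x := by
  unfold lamGen
  fun_prop (disch := exact hx)

theorem contDiff_muGen_seqOfFin {n : ℕ} :
    ContDiff ℝ 1 (fun y : Fin (n + 1) → ℝ => muGen d c K w (seqOfFin y)) := by
  unfold muGen
  fun_prop

end Rates

structure CompartmentalModel where
  d : ℕ
  f0 : ℝ
  g0 : ℝ
  K10 : ℝ
  K20 : ℝ
  f : ℕ → ℝ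
  g : ℕ → ℝ
  K1 : ℕ → ℝ
  K2 : ℕ → ℝ
  a : ℕ → ℝ
  b : ℕ → ℝ
  w1 : ℕ → ℝ
  w2 : ℕ → ℝ

namespace CompartmentalModel

variable (p : CompartmentalModel)

structure Admissible : Prop where
  one_le_d : 1 ≤ p.d
  f0_nonneg : 0 ≤ p.f0
  g0_nonneg : 0 ≤ p.g0
  K10_nonneg : 0 ≤ p.K10
  K20_nonneg : 0 ≤ p.K20
  f_nonneg : ∀ i, 1 ≤ i → i ≤ p.d → 0 ≤ p.f i
  f_d : p.f p.d = 0
  g_nonneg : ∀ i, 1 ≤ i → i ≤ p.d → 0 ≤ p.g i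
  K1_nonneg : ∀ i, 1 ≤ i → i ≤ p.d → 0 ≤ p.K1 i
  K2_nonneg : ∀ i, 1 ≤ i → i ≤ p.d → 0 ≤ p.K2 i
  a_mem : ∀ j, 1 ≤ j → j ≤ p.d → p.a j ∈ Set.Icc (0 : ℝ) 1
  b_mem : ∀ j, 1 ≤ j → j ≤ p.d → p.b j ∈ Set.Icc (0 : ℝ) 1
  w1_mem : ∀ j, 1 ≤ j → j ≤ p.d → p.w1 j ∈ Set.Icc (0 : ℝ) 1
  w2_mem : ∀ j, 1 ≤ j → j ≤ p.d → p.w2 j ∈ Set.Icc (0 : ℝ) 1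

noncomputable def rhs (x : ℕ → ℝ) : ℕ → ℝ :=
  rhsODE p.d p.f0 p.g0 p.K10 p.K20 p.f p.g p.K1 p.K2 p.a p.b p.w1 p.w2 x

/-- The maturation rate out of compartment `i`: `λ̄₀` for `i = 0` and `λᵢ` otherwise. -/
noncomputable def lam (i : ℕ) (x : ℕ → ℝ) : ℝ :=
  if i = 0 then lamGen p.d p.f0 p.K10 p.a x else lamGen p.d (p.f i) (p.K1 i) p.w1 x

theorem rhs_zero (x : ℕ → ℝ) :
    p.rhs x 0 = -(p.lam 0 x + muGen p.d p.g0 p.K20 p.b x) * x 0 := by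
  simp [rhs, rhsODE, lam]

theorem rhs_succ (x : ℕ → ℝ) (i : ℕ) :
    p.rhs x (i + 1) = p.lam i x * x i
      - (p.lam (i + 1) x + muGen p.d (p.g (i + 1)) (p.K2 (i + 1)) p.w2 x) * x (i + 1) := by
  rcases i with _ | i <;> simp [rhs, rhsODE, lam]

variable {p}

theorem lam_nonneg (hp : p.Admissible) {x : ℕ → ℝ} (hx : ∀ j ≤ p.d, 0 ≤ x j) {i : ℕ}
    (hi : i ≤ p.d) : 0 ≤ p.lam i x := by
  unfold lam
  split_ifs with h0
  · exact lamGen_nonneg hp.f0_nonneg hp.K10_nonneg (fun j h1 h2 => (hp.a_mem j h1 h2).1) hx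
  · exact lamGen_nonneg (hp.f_nonneg i (Nat.one_le_iff_ne_zero.2 h0) hi)
      (hp.K1_nonneg i (Nat.one_le_iff_ne_zero.2 h0) hi) (fun j h1 h2 => (hp.w1_mem j h1 h2).1) hx

theorem rhs_congr {x x' : ℕ → ℝ} (h : ∀ j ≤ p.d, x j = x' j) {i : ℕ} (hi : i ≤ p.d) :
    p.rhs x i = p.rhs x' i := by
  have hlam (k : ℕ) : p.lam k x = p.lam k x' := by
    unfold lam; split_ifs <;> exact lamGen_congr h
  rcases i with _ | i
  · rw [rhs_zero, rhs_zero, hlam, muGen_congr h, h 0 hi]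
  · rw [rhs_succ, rhs_succ, hlam, hlam, muGen_congr h, h i (by omega), h (i + 1) hi]

theorem rhs_nonneg_of_eq_zero (hp : p.Admissible) {x : ℕ → ℝ} (hx : ∀ j ≤ p.d, 0 ≤ x j) {i : ℕ}
    (hi : i ≤ p.d) (hxi : x i = 0) : 0 ≤ p.rhs x i := by
  rcases i with _ | i
  · simp [rhs_zero, hxi]
  · rw [rhs_succ, hxi, mul_zero, sub_zero]
    exact mul_nonneg (lam_nonneg hp hx (by omega)) (hx i (by omega))

theorem sum_rhs (hp : p.Admissible) (x : ℕ → ℝ) :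
    ∑ i ∈ Finset.range (p.d + 1), p.rhs x i
      = -(muGen p.d p.g0 p.K20 p.b x * x 0)
        - ∑ i ∈ Finset.Icc 1 p.d, muGen p.d (p.g i) (p.K2 i) p.w2 x * x i := by
  set F : ℕ → ℝ := fun i => p.lam i x * x i
  set m : ℕ → ℝ := fun i => muGen p.d (p.g i) (p.K2 i) p.w2 x * x i
  have hFd : F p.d = 0 := by
    simp [F, lam, Nat.one_le_iff_ne_zero.1 hp.one_le_d, lamGen, hp.f_d]
  have hm : ∑ i ∈ Finset.range p.d, m (i + 1) = ∑ i ∈ Finset.Icc 1 p.d, m i := by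
    rw [Finset.range_eq_Ico, Finset.sum_Ico_add', Finset.Ico_add_one_right_eq_Icc]
  calc ∑ i ∈ Finset.range (p.d + 1), p.rhs x i
      = ∑ i ∈ Finset.range p.d, ((F i - F (i + 1)) - m (i + 1)) + p.rhs x 0 := by
        rw [Finset.sum_range_succ']
        exact congrArg (· + _) (Finset.sum_congr rfl fun i _ => by rw [rhs_succ]; ring)
    _ = -(muGen p.d p.g0 p.K20 p.b x * x 0) - ∑ i ∈ Finset.Icc 1 p.d, m i := by
        rw [Finset.sum_sub_distrib, Finset.sum_range_sub', hFd, hm, rhs_zero]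
        ring

theorem sum_rhs_nonpos (hp : p.Admissible) {x : ℕ → ℝ} (hx : ∀ j ≤ p.d, 0 ≤ x j) :
    ∑ i ∈ Finset.range (p.d + 1), p.rhs x i ≤ 0 := by
  have hw2 (j : ℕ) (h1 : 1 ≤ j) (h2 : j ≤ p.d) : 0 ≤ p.w2 j := (hp.w2_mem j h1 h2).1
  have h0 : 0 ≤ muGen p.d p.g0 p.K20 p.b x * x 0 :=
    mul_nonneg (muGen_nonneg hp.g0_nonneg hp.K20_nonneg (fun j h1 h2 => (hp.b_mem j h1 h2).1) hx)
      (hx 0 (Nat.zero_le _))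
  have hsum : 0 ≤ ∑ i ∈ Finset.Icc 1 p.d, muGen p.d (p.g i) (p.K2 i) p.w2 x * x i :=
    Finset.sum_nonneg fun i hi => by
      obtain ⟨h1, h2⟩ := Finset.mem_Icc.1 hi
      exact mul_nonneg (muGen_nonneg (hp.g_nonneg i h1 h2) (hp.K2_nonneg i h1 h2) hw2 hx) (hx i h2)
  rw [sum_rhs hp]
  linarith

variable (p) in
noncomputable def field (x : Fin (p.d + 1) → ℝ) : Fin (p.d + 1) → ℝ :=
  finOfSeq (p.rhs (seqOfFin x))

theorem contDiffAt_lam (hp : p.Admissible) {x : Fin (p.d + 1) → ℝ} (hx : 0 ≤ x) {i : ℕ}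
    (hi : i ≤ p.d) : ContDiffAt ℝ 1 (fun y => p.lam i (seqOfFin y)) x := by
  have hx' (j : ℕ) (_ : j ≤ p.d) : 0 ≤ seqOfFin x j := seqOfFin_nonneg hx j
  by_cases h0 : i = 0
  · simp only [lam, h0, if_true]
    exact contDiffAt_lamGen_seqOfFin (zero_lt_one.trans_le (one_le_one_add_mul_sum
      hp.K10_nonneg (fun j h1 h2 => (hp.a_mem j h1 h2).1) hx')).ne'
  · simp only [lam, h0, if_false]
    exact contDiffAt_lamGen_seqOfFin (zero_lt_one.trans_le (one_le_one_add_mul_sum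
      (hp.K1_nonneg i (Nat.one_le_iff_ne_zero.2 h0) hi) (fun j h1 h2 => (hp.w1_mem j h1 h2).1)
      hx')).ne'

theorem contDiffAt_field (hp : p.Admissible) {x : Fin (p.d + 1) → ℝ} (hx : 0 ≤ x) :
    ContDiffAt ℝ 1 p.field x := by
  refine contDiffAt_pi.2 fun i => ?_
  obtain ⟨_ | i, hi⟩ := i
  · have := contDiffAt_lam hp hx (Nat.zero_le _)
    have := (contDiff_muGen_seqOfFin (d := p.d) (c := p.g0) (K := p.K20) (w := p.b)).contDiffAt
      (x := x)
    simp only [field, finOfSeq, rhs_zero]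
    fun_prop
  · have := contDiffAt_lam hp hx (i := i) (by omega)
    have := contDiffAt_lam hp hx (i := i + 1) (by omega)
    have := (contDiff_muGen_seqOfFin (d := p.d) (c := p.g (i + 1)) (K := p.K2 (i + 1))
      (w := p.w2)).contDiffAt (x := x)
    simp only [field, finOfSeq, rhs_succ]
    fun_prop

theorem field_nonneg_of_eq_zero (hp : p.Admissible) {x : Fin (p.d + 1) → ℝ} (hx : 0 ≤ x)
    {i : Fin (p.d + 1)} (hxi : x i = 0) : 0 ≤ p.field x i :=
  rhs_nonneg_of_eq_zero hp (fun j _ => seqOfFin_nonneg hx j) i.is_le (by rw [seqOfFin_val, hxi])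

theorem sum_field_nonpos (hp : p.Admissible) {x : Fin (p.d + 1) → ℝ} (hx : 0 ≤ x) :
    ∑ i, p.field x i ≤ 0 :=
  (Fin.sum_univ_eq_sum_range (fun j => p.rhs (seqOfFin x) j) _).trans_le
    (sum_rhs_nonpos hp fun j _ => seqOfFin_nonneg hx j)

theorem exists_nonneg_hasDerivAt_field (hp : p.Admissible) {x₀ : Fin (p.d + 1) → ℝ}
    (hx₀ : 0 ≤ x₀) :
    ∃ Y : ℝ → Fin (p.d + 1) → ℝ, Y 0 = x₀ ∧ ∀ t ≥ 0, 0 ≤ Y t ∧ HasDerivAt Y (p.field (Y t)) t := by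
  set M := ∑ i, x₀ i
  have hM : 0 ≤ M := Finset.sum_nonneg fun i _ => hx₀ i
  set box := Icc (0 : Fin (p.d + 1) → ℝ) fun _ => M
  have hsmooth : ∀ x ∈ box, ContDiffAt ℝ 1 p.field x := fun x hx => contDiffAt_field hp hx.1
  obtain ⟨K, hK⟩ := isCompact_Icc.exists_lipschitzOnWith_of_contDiffAt hsmooth
  obtain ⟨C, hC⟩ := isCompact_Icc.exists_bound_of_continuousOn fun x hx =>
    (hsmooth x hx).continuousAt.continuousWithinAt
  have hG : LipschitzWith (K * 1) (p.field ∘ clampBox M) := by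
    rw [← lipschitzOnWith_univ]
    exact hK.comp (lipschitzWith_clampBox M).lipschitzOnWith fun x _ => clampBox_mem_Icc hM x
  obtain ⟨Y, hY0, hY⟩ :=
    hG.exists_forall_hasDerivAt_of_norm_le (fun x => hC _ (clampBox_mem_Icc hM x)) x₀
  have hclamp (x : Fin (p.d + 1) → ℝ) : 0 ≤ clampBox M x := (clampBox_mem_Icc hM x).1
  have hnn : ∀ t ≥ 0, 0 ≤ Y t := fun t ht i =>
    nonneg_of_hasDerivAt_of_neg_imp_deriv_nonneg (fun s _ => hasDerivAt_pi.1 (hY s) i)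
      (fun s _ hs => field_nonneg_of_eq_zero hp (hclamp _) (clampBox_apply_eq_zero hs.le))
      (by rw [hY0]; exact hx₀ i) ht
  have hmass : ∀ t ≥ 0, ∑ i, Y t i ≤ M := fun t ht => by
    simpa [hY0] using antitoneOn_Ici_of_hasDerivAt_nonpos
      (fun s _ => HasDerivAt.fun_sum fun i _ => hasDerivAt_pi.1 (hY s) i)
      (fun s _ => sum_field_nonpos hp (hclamp _)) self_mem_Ici ht ht
  refine ⟨Y, hY0, fun t ht => ⟨hnn t ht, ?_⟩⟩
  have hYbox : Y t ∈ box := ⟨hnn t ht, fun i =>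
    (Finset.single_le_sum (fun j _ => hnn t ht j) (Finset.mem_univ i)).trans (hmass t ht)⟩
  simpa only [Function.comp_apply, clampBox_eq_self hYbox] using hY t

variable (p) in
def IsSolution (y : ℝ → ℕ → ℝ) : Prop :=
  ∀ t, 0 ≤ t → ∀ i, i ≤ p.d → HasDerivAt (fun s => y s i) (p.rhs (y t) i) t

theorem isSolution_seqOfFin {Y : ℝ → Fin (p.d + 1) → ℝ}
    (hY : ∀ t ≥ 0, HasDerivAt Y (p.field (Y t)) t) : p.IsSolution fun t => seqOfFin (Y t) :=
  fun t ht i hi => by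
    simpa [field, finOfSeq, seqOfFin, Nat.mod_eq_of_lt (Nat.lt_succ_of_le hi)] using
      hasDerivAt_pi.1 (hY t ht) (Fin.ofNat (p.d + 1) i)

theorem IsSolution.hasDerivAt_field {y : ℝ → ℕ → ℝ} (hy : p.IsSolution y) {t : ℝ} (ht : 0 ≤ t) :
    HasDerivAt (fun s => finOfSeq (y s)) (p.field (finOfSeq (y t))) t :=
  hasDerivAt_pi.2 fun i => by
    have : p.field (finOfSeq (y t)) i = p.rhs (y t) i :=
      rhs_congr (fun j hj => seqOfFin_finOfSeq (y t) hj) i.is_le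
    rw [this]
    exact hy t ht i i.is_le

theorem exists_isSolution (hp : p.Admissible) {yin : ℕ → ℝ} (hyin : ∀ i ≤ p.d, 0 ≤ yin i) :
    ∃ y : ℝ → ℕ → ℝ, (∀ i ≤ p.d, y 0 i = yin i) ∧ p.IsSolution y ∧
      ∀ t ≥ 0, ∀ i ≤ p.d, 0 ≤ y t i := by
  obtain ⟨Y, hY0, hY⟩ :=
    exists_nonneg_hasDerivAt_field hp (x₀ := finOfSeq yin) fun i => hyin i i.is_le
  exact ⟨fun t => seqOfFin (Y t), fun i hi => by simp only [hY0, seqOfFin_finOfSeq yin hi],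
    isSolution_seqOfFin fun t ht => (hY t ht).2, fun t ht i _ => seqOfFin_nonneg (hY t ht).1 i⟩

theorem IsSolution.eq_of_nonneg (hp : p.Admissible) {y z : ℝ → ℕ → ℝ} (hy : p.IsSolution y)
    (hz : p.IsSolution z) (hy_nonneg : ∀ t ≥ 0, ∀ i ≤ p.d, 0 ≤ y t i)
    (h0 : ∀ i ≤ p.d, z 0 i = y 0 i) : ∀ t ≥ 0, ∀ i ≤ p.d, z t i = y t i := by
  have hfin := eqOn_Ici_of_hasDerivAt_of_contDiffAt
    (fun t ht => contDiffAt_field hp fun i => hy_nonneg t ht i i.is_le)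
    (fun t ht => hy.hasDerivAt_field ht) (fun t ht => hz.hasDerivAt_field ht)
    (funext fun i => (h0 i i.is_le).symm)
  intro t ht i hi
  rw [← seqOfFin_finOfSeq (z t) hi, ← seqOfFin_finOfSeq (y t) hi]
  exact congrArg (seqOfFin · i) (hfin ht).symm

theorem IsSolution.hasDerivAt_mass {y : ℝ → ℕ → ℝ} (hy : p.IsSolution y) {t : ℝ} (ht : 0 ≤ t) :
    HasDerivAt (fun s => ∑ i ∈ Finset.range (p.d + 1), y s i)
      (∑ i ∈ Finset.range (p.d + 1), p.rhs (y t) i) t :=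
  HasDerivAt.fun_sum fun i hi => hy t ht i (Nat.lt_succ_iff.1 (Finset.mem_range.1 hi))

theorem IsSolution.antitoneOn_mass (hp : p.Admissible) {y : ℝ → ℕ → ℝ} (hy : p.IsSolution y)
    (hy_nonneg : ∀ t ≥ 0, ∀ i ≤ p.d, 0 ≤ y t i) :
    AntitoneOn (fun s => ∑ i ∈ Finset.range (p.d + 1), y s i) (Ici 0) :=
  antitoneOn_Ici_of_hasDerivAt_nonpos (fun _ ht => hy.hasDerivAt_mass ht)
    fun t ht => sum_rhs_nonpos hp (hy_nonneg t ht)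

end CompartmentalModel

/-- existence, uniqueness (for `t ≥ 0`), nonnegativity, decay of the
total population and global boundedness for the nonlinear compartmental ODE model. -/
theorem stmt0
    (d : ℕ) (hd : 1 ≤ d)
    (f0 g0 K10 K20 : ℝ) (f g K1 K2 a b w1 w2 : ℕ → ℝ)
    (hf0 : 0 ≤ f0) (hg0 : 0 ≤ g0) (hK10 : 0 ≤ K10) (hK20 : 0 ≤ K20)
    (hf : ∀ i, 1 ≤ i → i ≤ d → 0 ≤ f i) (hfd : f d = 0)
    (hg : ∀ i, 1 ≤ i → i ≤ d → 0 ≤ g i)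
    (hK1 : ∀ i, 1 ≤ i → i ≤ d → 0 ≤ K1 i)
    (hK2 : ∀ i, 1 ≤ i → i ≤ d → 0 ≤ K2 i)
    (ha : ∀ j, 1 ≤ j → j ≤ d → a j ∈ Set.Icc (0 : ℝ) 1)
    (hb : ∀ j, 1 ≤ j → j ≤ d → b j ∈ Set.Icc (0 : ℝ) 1)
    (hw1 : ∀ j, 1 ≤ j → j ≤ d → w1 j ∈ Set.Icc (0 : ℝ) 1)
    (hw2 : ∀ j, 1 ≤ j → j ≤ d → w2 j ∈ Set.Icc (0 : ℝ) 1)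
    (yin : ℕ → ℝ) (hyin : ∀ i, i ≤ d → 0 ≤ yin i) :
    ∃ y : ℝ → ℕ → ℝ,
      -- initial condition
      (∀ i, i ≤ d → y 0 i = yin i) ∧
      -- `y` solves the ODE system for all `t ≥ 0`
      (∀ t, 0 ≤ t → ∀ i, i ≤ d →
        HasDerivAt (fun s => y s i)
          (rhsODE d f0 g0 K10 K20 f g K1 K2 a b w1 w2 (y t) i) t) ∧
      -- uniqueness: any other solution coincides with `y` for `t ≥ 0`
      (∀ z : ℝ → ℕ → ℝ,
        (∀ i, i ≤ d → z 0 i = yin i) →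
        (∀ t, 0 ≤ t → ∀ i, i ≤ d →
          HasDerivAt (fun s => z s i)
            (rhsODE d f0 g0 K10 K20 f g K1 K2 a b w1 w2 (z t) i) t) →
        ∀ t, 0 ≤ t → ∀ i, i ≤ d → z t i = y t i) ∧
      -- nonnegativity of all components
      (∀ t, 0 ≤ t → ∀ i, i ≤ d → 0 ≤ y t i) ∧
      -- the total population is differentiable with the stated nonpositive derivative
      (∀ t, 0 ≤ t →
        HasDerivAt (fun s => ∑ i ∈ Finset.range (d + 1), y s i)
          (-(muGen d g0 K20 b (y t) * y t 0)
            - ∑ i ∈ Finset.Icc 1 d, muGen d (g i) (K2 i) w2 (y t) * y t i) t ∧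
        (-(muGen d g0 K20 b (y t) * y t 0)
            - ∑ i ∈ Finset.Icc 1 d, muGen d (g i) (K2 i) w2 (y t) * y t i) ≤ 0) ∧
      -- hence the total population `t ↦ ∑ yᵢ(t)` is nonincreasing on `[0,∞)`
      (∀ s t, 0 ≤ s → s ≤ t →
        ∑ i ∈ Finset.range (d + 1), y t i ≤ ∑ i ∈ Finset.range (d + 1), y s i) ∧
      -- and every component is globally bounded
      (∀ i, i ≤ d → ∃ C : ℝ, ∀ t, 0 ≤ t → y t i ≤ C) := by
  let p : CompartmentalModel := ⟨d, f0, g0, K10, K20, f, g, K1, K2, a, b, w1, w2⟩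
  have hp : p.Admissible := ⟨hd, hf0, hg0, hK10, hK20, hf, hfd, hg, hK1, hK2, ha, hb, hw1, hw2⟩
  obtain ⟨y, hy0, hy, hnn⟩ := CompartmentalModel.exists_isSolution hp hyin
  have hmass := hy.antitoneOn_mass hp hnn
  refine ⟨y, hy0, hy,
    fun z hz0 hz => hy.eq_of_nonneg hp hz hnn fun i hi => (hz0 i hi).trans (hy0 i hi).symm,
    hnn, fun t ht => ⟨?_, ?_⟩, fun s t hs hst => hmass hs (hs.trans hst) hst,
    fun i hi => ⟨∑ j ∈ Finset.range (d + 1), y 0 j, fun t ht => ?_⟩⟩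
  · have := hy.hasDerivAt_mass ht
    rwa [p.sum_rhs hp] at this
  · have := CompartmentalModel.sum_rhs_nonpos hp (hnn t ht)
    rwa [p.sum_rhs hp] at this
  · calc y t i ≤ ∑ j ∈ Finset.range (d + 1), y t j :=
          Finset.single_le_sum (fun j hj => hnn t ht j (Nat.lt_succ_iff.1 (Finset.mem_range.1 hj)))
            (Finset.mem_range.2 (Nat.lt_succ_of_le hi))
      _ ≤ ∑ j ∈ Finset.range (d + 1), y 0 j := hmass self_mem_Ici ht ht
end

section
/- (Proposition 1) Assume K_{1,i} = K_{2,i} = 0 for all i ∈ {0,…,d} and f_i + g_i > 0 for all i ∈ {1,…,d}. For each ε > 0, let x^ε = (x_0^ε,…,x_d^ε) be the solution of the rescaled linear system dx_0/dt = -(f_0+g_0) x_0, ε dx_i/dt = f_{i-1} x_{i-1} - (f_i+g_i) x_i (i = 1,…,d, with f_d = 0), with fixed initial data x_0^{in} > 0, x_i^{in} ≥ 0. Then for every η > 0, lim_{ε→0} sup_{t > η} max_{i ∈ {1,…,d}} | x_i^ε(t) - x̄_i(t) | = 0, where x̄_i(t) = (Π_{j=0}^{i-1} f_j/(f_{j+1}+g_{j+1}))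 x_0^{in} exp(-(f_0+g_0) t). -/
/-!
The slow component is exactly `x̄₀ = x₀ⁱⁿ e^{-(f₀+g₀)t}`. Since `(fᵢ + gᵢ) x̄ᵢ = fᵢ₋₁ x̄ᵢ₋₁`, the
error `eᵢ = xᵢ - x̄ᵢ` of a fast component solves the relaxation equation
`ε eᵢ' = -(fᵢ + gᵢ) eᵢ + fᵢ₋₁ eᵢ₋₁ + ε (f₀ + g₀) x̄ᵢ`. Grönwall's inequality on `[η/2, t]` bounds
`|eᵢ(t)|` by an initial-layer term of size `e^{-(fᵢ+gᵢ)η/(2ε)}`, a multiple of `sup |eᵢ₋₁|` on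
`[η/2, ∞)` and a term `O(ε)`; induction on `i` concludes. The same relaxation estimate on
`[0, t]` bounds every `xᵢ` uniformly in `ε`, which controls the initial layer.
-/

open Set Filter Topology Real

theorem le_of_hasDerivAt_le_neg_mul_add {e e' : ℝ → ℝ} {a b k c : ℝ} (hk : k ≠ 0) (hab : a ≤ b)
    (he : ∀ t ∈ Icc a b, HasDerivAt e (e' t) t) (bound : ∀ t ∈ Icc a b, e' t ≤ -k * e t + c) :
    e b ≤ e a * exp (-k * (b - a)) + c / k * (1 - exp (-k * (b - a))) := by
  have h := le_gronwallBound_of_liminf_deriv_right_le (f := e) (f' := e') (δ := e a) (K := -k)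
    (ε := c) (fun t ht => (he t ht).continuousAt.continuousWithinAt)
    (fun t ht r hr => by
      simpa only [slope_def_field, div_eq_inv_mul] using
        (he t (Ico_subset_Icc_self ht)).hasDerivWithinAt.liminf_right_slope_le hr)
    le_rfl (fun t ht => bound t (Ico_subset_Icc_self ht)) b ⟨hab, le_rfl⟩
  rw [gronwallBound_of_K_ne_0 (neg_ne_zero.2 hk)] at h
  convert h using 2
  field_simp
  ring

theorem abs_le_of_hasDerivAt_eq_neg_mul_add {e r : ℝ → ℝ} {a b k c : ℝ} (hk : 0 < k) (hab : a ≤ b)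
    (he : ∀ t ∈ Icc a b, HasDerivAt e (-k * e t + r t) t) (hr : ∀ t ∈ Icc a b, |r t| ≤ c) :
    |e b| ≤ |e a| * exp (-k * (b - a)) + c / k := by
  have hc : 0 ≤ c / k := div_nonneg ((abs_nonneg _).trans (hr a ⟨le_rfl, hab⟩)) hk.le
  have hpos := le_of_hasDerivAt_le_neg_mul_add (c := c) hk.ne' hab he
    fun t ht => by linarith [le_abs_self (r t), hr t ht]
  have hneg := le_of_hasDerivAt_le_neg_mul_add (e := fun t => -e t) (c := c) hk.ne' hab
    (fun t ht => ((he t ht).neg).congr_deriv (neg_add' _ _))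
    fun t ht => by linarith [neg_abs_le (r t), hr t ht]
  have hE := exp_pos (-k * (b - a))
  rw [abs_le]
  constructor <;> nlinarith [le_abs_self (e a), neg_abs_le (e a)]

theorem eq_mul_exp_of_hasDerivAt {y : ℝ → ℝ} {k : ℝ}
    (hy : ∀ t, 0 ≤ t → HasDerivAt y (k * y t) t) (t : ℝ) (ht : 0 ≤ t) :
    y t = y 0 * exp (k * t) := by
  have hw : ∀ s, 0 ≤ s → HasDerivAt (fun s => y s * exp (-k * s)) 0 s := fun s hs =>
    ((hy s hs).mul ((hasDerivAt_id' s).const_mul (-k)).exp).congr_deriv (by ring)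
  have := constant_of_has_deriv_right_zero (f := fun s => y s * exp (-k * s)) (a := 0) (b := t)
    (fun s hs => (hw s hs.1).continuousAt.continuousWithinAt)
    (fun s hs => (hw s hs.1).hasDerivWithinAt) t ⟨ht, le_rfl⟩
  simp only [mul_zero, exp_zero, mul_one] at this
  rw [← this, mul_assoc, ← exp_add]
  simp

theorem tendsto_exp_neg_div_nhdsGT_zero {k : ℝ} (hk : 0 < k) :
    Tendsto (fun ε => exp (-(k / ε))) (𝓝[>] 0) (𝓝 0) :=
  tendsto_exp_neg_atTop_nhds_zero.comp (tendsto_inv_nhdsGT_zero.const_mul_atTop hk)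

section Relaxation

variable {μ c ε : ℝ}

theorem abs_le_of_hasDerivAt_relax {u v : ℝ → ℝ} {M : ℝ} (hμ : 0 < μ) (hε : 0 < ε)
    (hu : ∀ t, 0 ≤ t → HasDerivAt u ((1 / ε) * (c * v t - μ * u t)) t)
    (hv : ∀ t, 0 ≤ t → |v t| ≤ M) {t : ℝ} (ht : 0 ≤ t) :
    |u t| ≤ |u 0| + |c| * M / μ := by
  have h := abs_le_of_hasDerivAt_eq_neg_mul_add (r := fun s => c * v s / ε) (c := |c| * M / ε)
    (div_pos hμ hε) ht (fun s hs => (hu s hs.1).congr_deriv (by field_simp; ring))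
    fun s hs => by
      rw [abs_div, abs_mul, abs_of_pos hε]
      gcongr
      exact hv s hs.1
  have hE : exp (-(μ / ε) * (t - 0)) ≤ 1 := exp_le_one_iff.2 (by
    have : 0 ≤ μ / ε * t := by positivity
    linarith)
  calc |u t| ≤ |u 0| * exp (-(μ / ε) * (t - 0)) + |c| * M / ε / (μ / ε) := h
    _ ≤ |u 0| + |c| * M / μ := by
      rw [div_div_div_cancel_right₀ hε.ne']
      gcongr
      exact mul_le_of_le_one_right (abs_nonneg _) hE

theorem abs_sub_le_of_hasDerivAt_relax {u v U V w : ℝ → ℝ} {a b δ D : ℝ}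
    (hμ : 0 < μ) (hε : 0 < ε) (hab : a ≤ b)
    (hu : ∀ t ∈ Icc a b, HasDerivAt u ((1 / ε) * (c * v t - μ * u t)) t)
    (hU : ∀ t ∈ Icc a b, HasDerivAt U (w t) t) (hw : ∀ t ∈ Icc a b, |w t| ≤ D)
    (hbal : ∀ t ∈ Icc a b, μ * U t = c * V t) (hv : ∀ t ∈ Icc a b, |v t - V t| ≤ δ) :
    |u b - U b| ≤ |u a - U a| * exp (-(μ / ε) * (b - a)) + (|c| * δ + ε * D) / μ := by
  have h := abs_le_of_hasDerivAt_eq_neg_mul_add (e := fun t => u t - U t)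
    (r := fun t => c * (v t - V t) / ε - w t) (c := |c| * δ / ε + D) (div_pos hμ hε) hab
    (fun t ht => ((hu t ht).sub (hU t ht)).congr_deriv (by
      field_simp
      linear_combination -(hbal t ht)))
    fun t ht => by
      calc |c * (v t - V t) / ε - w t| ≤ |c * (v t - V t) / ε| + |w t| := abs_sub _ _
        _ ≤ |c| * δ / ε + D := by
          rw [abs_div, abs_mul, abs_of_pos hε]
          gcongr
          exacts [hv t ht, hw t ht]
  calc |u b - U b| ≤ _ := h
    _ = _ := by congr 1; field_simp

theorem tendstoUniformlyOn_of_hasDerivAt_relax {a b B D : ℝ} {u v : ℝ → ℝ → ℝ}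
    {U V w : ℝ → ℝ} (hμ : 0 < μ) (hab : a < b)
    (hu : ∀ ε, 0 < ε → ∀ t, a ≤ t → HasDerivAt (u ε) ((1 / ε) * (c * v ε t - μ * u ε t)) t)
    (hU : ∀ t, a ≤ t → HasDerivAt U (w t) t) (hw : ∀ t, a ≤ t → |w t| ≤ D)
    (hbal : ∀ t, a ≤ t → μ * U t = c * V t) (hB : ∀ ε, 0 < ε → ∀ t, a ≤ t → |u ε t - U t| ≤ B)
    (hv : TendstoUniformlyOn v V (𝓝[>] 0) (Ici a)) :
    TendstoUniformlyOn u U (𝓝[>] 0) (Ici b) := by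
  rw [Metric.tendstoUniformlyOn_iff] at hv ⊢
  intro δ hδ
  have hsmall : Tendsto (fun ε => B * exp (-(μ * (b - a) / ε)) + ε * D / μ) (𝓝[>] 0)
      (𝓝 (B * 0 + 0 * D / μ)) :=
    ((tendsto_exp_neg_div_nhdsGT_zero (mul_pos hμ (sub_pos.2 hab))).const_mul B).add
      ((tendsto_nhdsWithin_of_tendsto_nhds tendsto_id).mul_const D |>.div_const μ)
  rw [mul_zero, zero_mul, zero_div, add_zero] at hsmall
  filter_upwards [self_mem_nhdsWithin, hsmall.eventually (gt_mem_nhds (half_pos hδ)),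
    hv (μ * δ / (2 * (|c| + 1))) (by positivity)] with ε hε hεsmall hεv t ht
  have hB0 : 0 ≤ B := (abs_nonneg _).trans (hB ε hε a le_rfl)
  have h := abs_sub_le_of_hasDerivAt_relax hμ hε (le_of_lt (hab.trans_le ht))
    (fun s hs => hu ε hε s hs.1) (fun s hs => hU s hs.1) (fun s hs => hw s hs.1)
    (fun s hs => hbal s hs.1) (fun s hs => by rw [abs_sub_comm]; exact (hεv s hs.1).le)
  have hexp : exp (-(μ / ε) * (t - a)) ≤ exp (-(μ * (b - a) / ε)) := by
    rw [neg_mul]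
    exact exp_le_exp.2 (neg_le_neg (by rw [div_mul_eq_mul_div]; gcongr; exacts [hε.out.le, ht]))
  have hc : |c| * (μ * δ / (2 * (|c| + 1))) / μ < δ / 2 := by
    have : |c| * (μ * δ / (2 * (|c| + 1))) / μ = δ / 2 * (|c| / (|c| + 1)) := by
      field_simp
    rw [this]
    exact mul_lt_of_lt_one_right (half_pos hδ) ((div_lt_one (by positivity)).2 (lt_add_one _))
  rw [dist_comm, Real.dist_eq]
  calc |u ε t - U t| ≤ _ := h
    _ ≤ B * exp (-(μ * (b - a) / ε)) + (|c| * (μ * δ / (2 * (|c| + 1))) + ε * D) / μ := by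
      gcongr
      exact hB ε hε a le_rfl
    _ < δ := by
      rw [add_div]
      linarith

end Relaxation

noncomputable def quasiSteadyState (f g : ℕ → ℝ) (x0 : ℝ) (i : ℕ) (t : ℝ) : ℝ :=
  (∏ j ∈ Finset.range i, f j / (f (j + 1) + g (j + 1))) * (x0 * exp (-(f 0 + g 0) * t))

section QuasiSteadyState

variable {f g : ℕ → ℝ} {x0 : ℝ}

theorem quasiSteadyState_zero (t : ℝ) :
    quasiSteadyState f g x0 0 t = x0 * exp (-(f 0 + g 0) * t) := by
  simp [quasiSteadyState]

theorem mul_quasiSteadyState_succ {i : ℕ} (h : f (i + 1) + g (i + 1) ≠ 0) (t : ℝ) :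
    (f (i + 1) + g (i + 1)) * quasiSteadyState f g x0 (i + 1) t =
      f i * quasiSteadyState f g x0 i t := by
  simp only [quasiSteadyState, Finset.prod_range_succ]
  field_simp

theorem hasDerivAt_quasiSteadyState (i : ℕ) (t : ℝ) :
    HasDerivAt (quasiSteadyState f g x0 i) (-(f 0 + g 0) * quasiSteadyState f g x0 i t) t :=
  ((((hasDerivAt_id' t).const_mul _).exp.const_mul x0).const_mul _).congr_deriv (by
    simp only [quasiSteadyState]; ring)

theorem abs_quasiSteadyState_le (hL : 0 ≤ f 0 + g 0) (i : ℕ) {t : ℝ} (ht : 0 ≤ t) :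
    |quasiSteadyState f g x0 i t| ≤ |quasiSteadyState f g x0 i 0| := by
  simp only [quasiSteadyState, abs_mul, abs_exp, mul_zero, exp_zero, mul_one]
  gcongr
  exact mul_le_of_le_one_right (abs_nonneg x0) (exp_le_one_iff.2 (by nlinarith))

end QuasiSteadyState

theorem bounded_and_tendstoUniformlyOn_quasiSteadyState (d : ℕ) (f g : ℕ → ℝ)
    (hL : 0 ≤ f 0 + g 0) (hfg : ∀ i, 1 ≤ i → i ≤ d → 0 < f i + g i) (x0in : ℝ)
    (xin : ℕ → ℝ) (x : ℝ → ℝ → ℕ → ℝ)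
    (hinit0 : ∀ ε : ℝ, 0 < ε → x ε 0 0 = x0in)
    (hinit : ∀ ε : ℝ, 0 < ε → ∀ i, 1 ≤ i → i ≤ d → x ε 0 i = xin i)
    (hslow : ∀ ε : ℝ, 0 < ε → ∀ t, 0 ≤ t →
      HasDerivAt (fun s => x ε s 0) (-(f 0 + g 0) * x ε t 0) t)
    (hfast : ∀ ε : ℝ, 0 < ε → ∀ t, 0 ≤ t → ∀ i, 1 ≤ i → i ≤ d →
      HasDerivAt (fun s => x ε s i)
        ((1 / ε) * (f (i - 1) * x ε t (i - 1) - (f i + g i) * x ε t i)) t) :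
    ∀ i ≤ d, (∃ M, ∀ ε, 0 < ε → ∀ t, 0 ≤ t → |x ε t i| ≤ M) ∧
      ∀ η, 0 < η → TendstoUniformlyOn (fun ε t => x ε t i) (quasiSteadyState f g x0in i)
        (𝓝[>] 0) (Ici η) := by
  intro i
  induction i with
  | zero =>
    intro _
    have hx0 : ∀ ε, 0 < ε → ∀ t, 0 ≤ t → x ε t 0 = quasiSteadyState f g x0in 0 t :=
      fun ε hε t ht => by
        rw [eq_mul_exp_of_hasDerivAt (hslow ε hε) t ht, hinit0 ε hε, quasiSteadyState_zero]
    refine ⟨⟨|quasiSteadyState f g x0in 0 0|, fun ε hε t ht => ?_⟩, fun η hη => ?_⟩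
    · rw [hx0 ε hε t ht]
      exact abs_quasiSteadyState_le hL 0 ht
    · refine Metric.tendstoUniformlyOn_iff.2 fun δ hδ => ?_
      filter_upwards [self_mem_nhdsWithin] with ε hε t ht
      rwa [hx0 ε hε t (hη.le.trans ht), dist_self]
  | succ i ih =>
    intro hi
    obtain ⟨⟨M, hM⟩, hconv⟩ := ih (by omega)
    have hμ := hfg (i + 1) (by omega) hi
    have hu : ∀ ε, 0 < ε → ∀ t, 0 ≤ t → HasDerivAt (fun s => x ε s (i + 1))
        ((1 / ε) * (f i * x ε t i - (f (i + 1) + g (i + 1)) * x ε t (i + 1))) t :=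
      fun ε hε t ht => by simpa using hfast ε hε t ht (i + 1) (by omega) hi
    have hbound : ∀ ε, 0 < ε → ∀ t, 0 ≤ t →
        |x ε t (i + 1)| ≤ |xin (i + 1)| + |f i| * M / (f (i + 1) + g (i + 1)) :=
      fun ε hε t ht => by
        simpa [hinit ε hε (i + 1) (by omega) hi] using
          abs_le_of_hasDerivAt_relax hμ hε (hu ε hε) (hM ε hε) ht
    set U := quasiSteadyState f g x0in (i + 1)
    refine ⟨⟨_, hbound⟩, fun η hη => ?_⟩
    refine tendstoUniformlyOn_of_hasDerivAt_relax hμ (half_lt_self hη)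
      (fun ε hε t ht => hu ε hε t ((half_pos hη).le.trans ht))
      (fun t _ => hasDerivAt_quasiSteadyState (i + 1) t) (D := (f 0 + g 0) * |U 0|)
      (fun t ht => ?_) (fun t _ => mul_quasiSteadyState_succ hμ.ne' t)
      (B := |xin (i + 1)| + |f i| * M / (f (i + 1) + g (i + 1)) + |U 0|)
      (fun ε hε t ht => ?_) (hconv _ (half_pos hη))
    · rw [abs_mul, abs_neg, abs_of_nonneg hL]
      exact mul_le_mul_of_nonneg_left
        (abs_quasiSteadyState_le hL _ ((half_pos hη).le.trans ht)) hL
    · have ht0 := (half_pos hη).le.trans ht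
      exact (abs_sub _ _).trans
        (add_le_add (hbound ε hε t ht0) (abs_quasiSteadyState_le hL _ ht0))

theorem stmt7_general
    (d : ℕ) (f g : ℕ → ℝ)
    (hf : ∀ j, j ≤ d → 0 ≤ f j)
    (hg : ∀ j, j ≤ d → 0 ≤ g j)
    (hfg : ∀ i, 1 ≤ i → i ≤ d → 0 < f i + g i)
    (x0in : ℝ) (xin : ℕ → ℝ)
    -- for each ε > 0, `x ε` is the solution of the rescaled linear system
    (x : ℝ → ℝ → ℕ → ℝ)
    (hinit0 : ∀ ε : ℝ, 0 < ε → x ε 0 0 = x0in)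
    (hinit : ∀ ε : ℝ, 0 < ε → ∀ i, 1 ≤ i → i ≤ d → x ε 0 i = xin i)
    (hslow : ∀ ε : ℝ, 0 < ε → ∀ t, 0 ≤ t →
      HasDerivAt (fun s => x ε s 0) (-(f 0 + g 0) * x ε t 0) t)
    (hfast : ∀ ε : ℝ, 0 < ε → ∀ t, 0 ≤ t → ∀ i, 1 ≤ i → i ≤ d →
      HasDerivAt (fun s => x ε s i)
        ((1 / ε) * (f (i - 1) * x ε t (i - 1) - (f i + g i) * x ε t i)) t) :
    -- conclusion: lim_{ε→0} sup_{t>η} max_{1≤i≤d} |xᵢ^ε(t) - x̄ᵢ(t)| = 0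
    ∀ η : ℝ, 0 < η → ∀ δ : ℝ, 0 < δ → ∃ ε0 : ℝ, 0 < ε0 ∧
      ∀ ε : ℝ, 0 < ε → ε < ε0 → ∀ t : ℝ, η < t → ∀ i, 1 ≤ i → i ≤ d →
        |x ε t i - (∏ j ∈ Finset.range i, f j / (f (j + 1) + g (j + 1)))
            * (x0in * Real.exp (-(f 0 + g 0) * t))| < δ := by
  intro η hη δ hδ
  have hconv := bounded_and_tendstoUniformlyOn_quasiSteadyState d f g
    (add_nonneg (hf 0 d.zero_le) (hg 0 d.zero_le)) hfg x0in xin x hinit0 hinit hslow hfast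
  have hev : ∀ᶠ ε in 𝓝[>] 0, ∀ i ∈ Finset.Icc 1 d, ∀ t ∈ Ici η,
      dist (quasiSteadyState f g x0in i t) (x ε t i) < δ :=
    (eventually_all_finset _).2 fun i hi =>
      Metric.tendstoUniformlyOn_iff.1 ((hconv i (Finset.mem_Icc.1 hi).2).2 η hη) δ hδ
  obtain ⟨ε0, hε0, hsmall⟩ := (nhdsGT_basis 0).eventually_iff.1 hev
  refine ⟨ε0, hε0, fun ε hε hεε0 t ht i hi hid => ?_⟩
  rw [← Real.dist_eq, dist_comm]
  exact hsmall ⟨hε, hεε0⟩ i (Finset.mem_Icc.2 ⟨hi, hid⟩) t ht.le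

/-- Proposition 1: in the linear case, the fast components of the rescaled
system converge, uniformly on `{t > η}` for every `η > 0`, to the quasi-steady-state
limit `x̄ᵢ(t) = (∏_{j=0}^{i-1} fⱼ/(f_{j+1}+g_{j+1})) x₀ⁱⁿ e^{-(f₀+g₀)t}` as `ε → 0`. -/
theorem stmt7
    (d : ℕ) (hd : 1 ≤ d) (f g : ℕ → ℝ)
    (hf : ∀ j, j ≤ d → 0 ≤ f j) (hfd : f d = 0)
    (hg : ∀ j, j ≤ d → 0 ≤ g j)
    (hfg : ∀ i, 1 ≤ i → i ≤ d → 0 < f i + g i)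
    (x0in : ℝ) (hx0in : 0 < x0in) (xin : ℕ → ℝ) (hxin : ∀ i, 1 ≤ i → i ≤ d → 0 ≤ xin i)
    -- for each ε > 0, `x ε` is the solution of the rescaled linear system
    (x : ℝ → ℝ → ℕ → ℝ)
    (hinit0 : ∀ ε : ℝ, 0 < ε → x ε 0 0 = x0in)
    (hinit : ∀ ε : ℝ, 0 < ε → ∀ i, 1 ≤ i → i ≤ d → x ε 0 i = xin i)
    (hslow : ∀ ε : ℝ, 0 < ε → ∀ t, 0 ≤ t →
      HasDerivAt (fun s => x ε s 0) (-(f 0 + g 0) * x ε t 0) t)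
    (hfast : ∀ ε : ℝ, 0 < ε → ∀ t, 0 ≤ t → ∀ i, 1 ≤ i → i ≤ d →
      HasDerivAt (fun s => x ε s i)
        ((1 / ε) * (f (i - 1) * x ε t (i - 1) - (f i + g i) * x ε t i)) t) :
    -- conclusion: lim_{ε→0} sup_{t>η} max_{1≤i≤d} |xᵢ^ε(t) - x̄ᵢ(t)| = 0
    ∀ η : ℝ, 0 < η → ∀ δ : ℝ, 0 < δ → ∃ ε0 : ℝ, 0 < ε0 ∧
      ∀ ε : ℝ, 0 < ε → ε < ε0 → ∀ t : ℝ, η < t → ∀ i, 1 ≤ i → i ≤ d →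
        |x ε t i - (∏ j ∈ Finset.range i, f j / (f (j + 1) + g (j + 1)))
            * (x0in * Real.exp (-(f 0 + g 0) * t))| < δ :=
  stmt7_general d f g hf hg hfg x0in xin x hinit0 hinit hslow hfast
end

section
/- Assume f ∈ C^1 with f > 0 on [0,1], g continuous, f_0, g_0 ≥ 0, ρ_0^{in} > 0, and ε > 0. Let X(0;t,x) denote the backward characteristic through (t,x) of dX/ds = f(X)/ε, and let ρ^{in} be a C^1 initial density. Then the pair ρ_0^ε(t) = ρ_0^{in} exp(-(f_0+g_0)t) together with ρ^ε(t,x) defined by ρ^ε(t,x) = exp( -∫_{X(0;t,x)}^x (g(y)+f'(y))/f(y) dy ) ρ^{in}(X(0;t,x)) when t ≤ ∫_0^x ε/f(y) dy, and ρ^ε(t,x) = (f_0/f(0)) ρ_0^{in} exp( -(f_0+g_0)( t - ∫_0^x ε/f(y) dy ) ) exp( -∫_0^x (g(y)+f'(y))/f(y) dy ) when t > ∫_0^x ε/f(y) dy, is a solution of the rescaled linear system d ρ_0/dt = -(f_0+g_0) ρ_0, ε ∂_t ρ(t,x) = -∂_x( f(x) ρ(t,x) ) - g(x) ρ(t,x)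 for x ∈ (0,1) away from the characteristic t = ∫_0^x ε/f(y) dy, with boundary condition lim_{x→0} f(x) ρ(t,x) = f_0 ρ_0(t) and initial condition (ρ_0^{in}, ρ^{in}). -/
set_option autoImplicit false

open Filter Set Topology

/-!
Write `T y = ∫₀ʸ ε / f` for the travel time from `0` to `y` and `F y = ∫₀ʸ (g + f') / f`.
Since `T` grows at unit rate along every characteristic as long as it stays where `f > 0`,
the foot `X (0; t, x)` of the characteristic is the point with travel time `T x - t`.
Hence on both sides of the front `t = T x` the density has the form
`ρ (t, y) = exp (-F y) * H (T y - t)`, with `H = (exp F * ρin) ∘ T⁻¹` ahead of the front and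
`H τ = (f₀ / f 0) ρ₀ⁱⁿ exp ((f₀ + g₀) τ)` behind it. Any such function solves
`ε ∂ₜρ = -∂ₓ(f ρ) - g ρ`, because `f exp (-F)` solves the stationary equation `(f A)' = -g A`
and `T' = ε / f`.
-/

theorem mem_Icc_and_eq_of_hasDerivAt_comp_eq_one_of_le {T Y : ℝ → ℝ} {a b σ₀ σ₁ : ℝ}
    (hT : StrictMonoOn T (Icc a b)) (hY : Continuous Y)
    (hTY : ∀ σ, Y σ ∈ Icc a b → HasDerivAt (fun τ => T (Y τ)) 1 σ)
    (hσ : σ₀ ≤ σ₁) (h₀ : Y σ₀ ∈ Ioc a b) (h₁ : T (Y σ₀) + (σ₁ - σ₀) ≤ T b) :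
    Y σ₁ ∈ Icc a b ∧ T (Y σ₁) = T (Y σ₀) + (σ₁ - σ₀) := by
  have ha : a ∈ Icc a b := left_mem_Icc.2 (h₀.1.le.trans h₀.2)
  have hb : b ∈ Icc a b := right_mem_Icc.2 (h₀.1.le.trans h₀.2)
  have hTa : T a < T (Y σ₀) := hT ha (Ioc_subset_Icc_self h₀) h₀.1
  set S := Y ⁻¹' Icc a b ∩ (fun τ => T (Y τ) - τ) ⁻¹' {T (Y σ₀) - σ₀}
  have hS_closed : IsClosed S :=
    ContinuousOn.preimage_isClosed_of_isClosed
      (fun τ hτ => ((hTY τ hτ).continuousAt.sub continuousAt_id).continuousWithinAt)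
      (isClosed_Icc.preimage hY) isClosed_singleton
  have hS_nhds : ∀ τ ∈ S ∩ Ico σ₀ σ₁, S ∈ 𝓝[>] τ := by
    rintro τ ⟨⟨hYτ, hτ_eq⟩, hτ₀, hτ₁⟩
    simp only [mem_preimage, mem_singleton_iff] at hτ_eq
    have hYτ_mem : Y τ ∈ Ioo a b :=
      ⟨(hT.lt_iff_lt ha hYτ).1 (by linarith), (hT.lt_iff_lt hYτ hb).1 (by linarith)⟩
    obtain ⟨l, u, hτlu, hlu⟩ := (mem_nhds_iff_exists_Ioo_subset).1
      (hY.continuousAt.preimage_mem_nhds (isOpen_Ioo.mem_nhds hYτ_mem))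
    have hφ : ∀ τ' ∈ Ioo l u, HasDerivAt (fun τ => T (Y τ) - τ) 0 τ' := fun τ' hτ' =>
      ((hTY τ' (Ioo_subset_Icc_self (hlu hτ'))).sub (hasDerivAt_id' τ')).congr_deriv (sub_self 1)
    have hsub : Ioo l u ⊆ S := fun τ' hτ' =>
      ⟨Ioo_subset_Icc_self (hlu hτ'), by
        rw [mem_preimage, mem_singleton_iff, ← hτ_eq]
        exact isOpen_Ioo.is_const_of_deriv_eq_zero isPreconnected_Ioo
          (fun x hx => (hφ x hx).differentiableAt.differentiableWithinAt)
          (fun x hx => (hφ x hx).deriv) hτ' hτlu⟩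
    exact mem_nhdsWithin_of_mem_nhds (mem_of_superset (isOpen_Ioo.mem_nhds hτlu) hsub)
  obtain ⟨hY₁, hφ₁⟩ := (hS_closed.inter isClosed_Icc).Icc_subset_of_forall_mem_nhdsWithin
    ⟨Ioc_subset_Icc_self h₀, rfl⟩ hS_nhds ⟨hσ, le_rfl⟩
  simp only [mem_preimage, mem_singleton_iff] at hφ₁
  exact ⟨hY₁, by linarith⟩

theorem mem_Icc_and_eq_of_hasDerivAt_comp_eq_one {T Y : ℝ → ℝ} {a b s σ : ℝ}
    (hT : StrictMonoOn T (Icc a b)) (hY : Continuous Y)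
    (hTY : ∀ σ, Y σ ∈ Icc a b → HasDerivAt (fun τ => T (Y τ)) 1 σ)
    (hs : Y s ∈ Ioo a b) (hσ : T (Y s) + (σ - s) ∈ Icc (T a) (T b)) :
    Y σ ∈ Icc a b ∧ T (Y σ) = T (Y s) + (σ - s) := by
  rcases le_total s σ with hsσ | hσs
  · exact mem_Icc_and_eq_of_hasDerivAt_comp_eq_one_of_le hT hY hTY hsσ
      (Ioo_subset_Ioc_self hs) hσ.2
  -- run the curve backwards: `τ ↦ -Y (-τ)` has unit rate for the clock `y ↦ -T (-y)`
  have hneg : ∀ {y}, y ∈ Icc (-b) (-a) → -y ∈ Icc a b := fun hy =>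
    ⟨le_neg_of_le_neg hy.2, neg_le_of_neg_le hy.1⟩
  have hT' : StrictMonoOn (fun y => -T (-y)) (Icc (-b) (-a)) := fun y hy z hz hyz =>
    neg_lt_neg (hT (hneg hz) (hneg hy) (neg_lt_neg hyz))
  have hTY' (τ : ℝ) (hτ : -Y (-τ) ∈ Icc (-b) (-a)) :
      HasDerivAt (fun τ => -T (-(-Y (-τ)))) 1 τ := by
    simp only [neg_neg] at hτ ⊢
    exact (((hTY (-τ) (by simpa using hneg hτ)).comp τ (hasDerivAt_neg τ)).neg).congr_deriv
      (by ring)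
  have := mem_Icc_and_eq_of_hasDerivAt_comp_eq_one_of_le (Y := fun τ => -Y (-τ)) hT'
    (hY.comp continuous_neg).neg hTY' (neg_le_neg hσs) (by simpa only [neg_neg] using ⟨neg_lt_neg hs.2, neg_le_neg hs.1.le⟩)
    (by simp only [neg_neg]; linarith [hσ.1])
  simp only [neg_neg] at this
  exact ⟨by simpa using hneg this.1, by linarith [this.2]⟩

theorem HasDerivAt.of_left_inverse_of_strictMonoOn {T Z : ℝ → ℝ} {a b τ T' : ℝ}
    (hT : StrictMonoOn T (Icc a b)) (hZ : ∀ σ ∈ Ioo (T a) (T b), Z σ ∈ Icc a b ∧ T (Z σ) = σ)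
    (hτ : τ ∈ Ioo (T a) (T b)) (hT' : HasDerivAt T T' (Z τ)) (hT'0 : T' ≠ 0) :
    HasDerivAt Z T'⁻¹ τ := by
  obtain ⟨hZτ, hTZτ⟩ := hZ τ hτ
  have hab : a ≤ b := hZτ.1.trans hZτ.2
  have hZ_mono : StrictMonoOn Z (Ioo (T a) (T b)) := fun σ hσ σ' hσ' hσσ' =>
    (hT.lt_iff_lt (hZ σ hσ).1 (hZ σ' hσ').1).1 (by rwa [(hZ σ hσ).2, (hZ σ' hσ').2])
  -- `Z` takes every value in `(a, b)`, which makes it continuous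
  have hZ_image : Ioo a b ⊆ Z '' Ioo (T a) (T b) := fun y hy => by
    have hTy : T y ∈ Ioo (T a) (T b) :=
      ⟨hT ⟨le_rfl, hab⟩ (Ioo_subset_Icc_self hy) hy.1,
        hT (Ioo_subset_Icc_self hy) ⟨hab, le_rfl⟩ hy.2⟩
    exact ⟨T y, hTy, hT.injOn (hZ _ hTy).1 (Ioo_subset_Icc_self hy) (hZ _ hTy).2⟩
  have hZτ_mem : Z τ ∈ Ioo a b :=
    ⟨(hT.lt_iff_lt ⟨le_rfl, hab⟩ hZτ).1 (by rw [hTZτ]; exact hτ.1),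
      (hT.lt_iff_lt hZτ ⟨hab, le_rfl⟩).1 (by rw [hTZτ]; exact hτ.2)⟩
  have hZ_cont : ContinuousAt Z τ := hZ_mono.continuousAt_of_image_mem_nhds
    (isOpen_Ioo.mem_nhds hτ) (mem_of_superset (isOpen_Ioo.mem_nhds hZτ_mem) hZ_image)
  exact HasDerivAt.of_local_left_inverse hZ_cont hT' hT'0
    (eventually_of_mem (isOpen_Ioo.mem_nhds hτ) fun σ hσ => (hZ σ hσ).2)

theorem hasDerivAt_integral_of_continuousOn {φ : ℝ → ℝ} {U : Set ℝ} {c y : ℝ} (hU : IsOpen U)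
    (hφ : ContinuousOn φ U) (hcy : uIcc c y ⊆ U) :
    HasDerivAt (fun y => ∫ u in c..y, φ u) (φ y) y :=
  intervalIntegral.integral_hasDerivAt_right (hφ.mono hcy).intervalIntegrable
    (hφ.stronglyMeasurableAtFilter hU y (hcy right_mem_uIcc))
    (hφ.continuousAt (hU.mem_nhds (hcy right_mem_uIcc)))

theorem strictMonoOn_Icc_of_hasDerivAt_pos {T T' : ℝ → ℝ} {a b : ℝ}
    (hT : ∀ y ∈ Icc a b, HasDerivAt T (T' y) y) (hpos : ∀ y ∈ Icc a b, 0 < T' y) :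
    StrictMonoOn T (Icc a b) :=
  strictMonoOn_of_deriv_pos (convex_Icc a b)
    (fun y hy => (hT y hy).continuousAt.continuousWithinAt) fun y hy => by
      rw [interior_Icc] at hy
      rw [(hT y (Ioo_subset_Icc_self hy)).deriv]
      exact hpos y (Ioo_subset_Icc_self hy)

theorem exists_transport_derivs {f g A H T : ℝ → ℝ} {ρ : ℝ → ℝ → ℝ} {ε t x H' : ℝ}
    (hfA : HasDerivAt (fun y => f y * A y) (-(g x * A x)) x)
    (hT : HasDerivAt T (ε / f x) x) (hfx : f x ≠ 0) (hH : HasDerivAt H H' (T x - t))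
    (hρt : ∀ᶠ s in 𝓝 t, ρ s x = A x * H (T x - s))
    (hρx : ∀ᶠ y in 𝓝 x, ρ t y = A y * H (T y - t)) :
    ∃ Dt Dx : ℝ, HasDerivAt (fun s => ρ s x) Dt t ∧ HasDerivAt (fun y => f y * ρ t y) Dx x ∧
      ε * Dt = -Dx - g x * ρ t x := by
  have hDt :=
    ((hH.comp t ((hasDerivAt_id t).const_sub (T x))).const_mul (A x)).congr_of_eventuallyEq hρt
  have hDx : HasDerivAt (fun y => f y * ρ t y) _ x :=
    (hfA.mul (hH.comp x (hT.sub_const t))).congr_of_eventuallyEq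
      (hρx.mono fun y hy => by simp only [hy, Pi.mul_apply, Function.comp_apply, mul_assoc])
  refine ⟨_, _, hDt, hDx, ?_⟩
  rw [hρx.self_of_nhds, Function.comp_apply]
  field_simp
  ring

theorem hasDerivAt_mul_exp_neg {f g F : ℝ → ℝ} {f' x : ℝ} (hf : HasDerivAt f f' x)
    (hfx : f x ≠ 0) (hF : HasDerivAt F ((g x + f') / f x) x) :
    HasDerivAt (fun y => f y * Real.exp (-F y)) (-(g x * Real.exp (-F x))) x := by
  refine (hf.mul hF.neg.exp).congr_deriv ?_
  simp only [Pi.neg_apply]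
  field_simp
  ring

theorem mem_Icc_and_eq_of_characteristic {f T : ℝ → ℝ} {X : ℝ → ℝ → ℝ → ℝ} {ε a b s y : ℝ}
    (hε : ε ≠ 0) (hf : ∀ z ∈ Icc a b, f z ≠ 0) (hT : ∀ z ∈ Icc a b, HasDerivAt T (ε / f z) z)
    (hTmono : StrictMonoOn T (Icc a b)) (hXinit : X s s y = y)
    (hXode : ∀ σ, HasDerivAt (fun σ => X σ s y) (f (X σ s y) / ε) σ)
    (hy : y ∈ Ioo a b) (hsy : T y - s ∈ Icc (T a) (T b)) :
    X 0 s y ∈ Icc a b ∧ T (X 0 s y) = T y - s := by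
  have := mem_Icc_and_eq_of_hasDerivAt_comp_eq_one (Y := fun σ => X σ s y) (s := s) (σ := 0) hTmono
    (continuous_iff_continuousAt.2 fun σ => (hXode σ).continuousAt)
    (fun σ hσ => ((hT _ hσ).comp σ (hXode σ)).congr_deriv (by field_simp [hf _ hσ]))
    (by rwa [hXinit]) (by rwa [hXinit, zero_sub, ← sub_eq_add_neg])
  rw [hXinit] at this
  exact ⟨this.1, by linarith [this.2]⟩

theorem exists_transport_derivs_ahead_of_front {f g A P T : ℝ → ℝ} {X : ℝ → ℝ → ℝ → ℝ}
    {ρ : ℝ → ℝ → ℝ} {ε a b t x : ℝ}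
    (hε : ε ≠ 0) (hf : ∀ z ∈ Icc a b, f z ≠ 0)
    (hT : ∀ z ∈ Icc a b, HasDerivAt T (ε / f z) z) (hTmono : StrictMonoOn T (Icc a b))
    (hXinit : ∀ s y, X s s y = y)
    (hXode : ∀ σ s y, HasDerivAt (fun σ => X σ s y) (f (X σ s y) / ε) σ)
    (hP : ∀ z ∈ Icc a b, DifferentiableAt ℝ P z)
    (hfA : HasDerivAt (fun y => f y * A y) (-(g x * A x)) x)
    (hρ : ∀ s y, s ≤ T y → y ∈ Icc a b → X 0 s y ∈ Icc a b → ρ s y = A y * P (X 0 s y))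
    (hx : x ∈ Ioo a b) (htx : t < T x) (hTxt : T x - t ∈ Ioo (T a) (T b)) :
    ∃ Dt Dx : ℝ, HasDerivAt (fun s => ρ s x) Dt t ∧ HasDerivAt (fun y => f y * ρ t y) Dx x ∧
      ε * Dt = -Dx - g x * ρ t x := by
  have hξ (s y : ℝ) := mem_Icc_and_eq_of_characteristic hε hf hT hTmono (hXinit s y)
    (hXode · s y)
  -- `Z τ` is the point at travel time `τ`, read off the characteristic through `x`
  set Z : ℝ → ℝ := fun τ => X 0 (T x - τ) x
  have hZ : ∀ τ ∈ Ioo (T a) (T b), Z τ ∈ Icc a b ∧ T (Z τ) = τ := fun τ hτ => by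
    simpa only [Z, sub_sub_cancel] using
      hξ (T x - τ) x hx (by rw [sub_sub_cancel]; exact Ioo_subset_Icc_self hτ)
  have hZ₀ := (hZ _ hTxt).1
  have hZ' := HasDerivAt.of_left_inverse_of_strictMonoOn hTmono hZ hTxt (hT _ hZ₀)
    (div_ne_zero hε (hf _ hZ₀))
  have hTx := hT x (Ioo_subset_Icc_self hx)
  refine exists_transport_derivs (H := P ∘ Z) hfA hTx (hf x (Ioo_subset_Icc_self hx))
    ((hP _ hZ₀).hasDerivAt.comp _ hZ') ?_ ?_
  · filter_upwards [(continuousAt_const.sub continuousAt_id).preimage_mem_nhds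
      (isOpen_Ioo.mem_nhds hTxt), eventually_lt_nhds htx] with s hs hst
    rw [hρ s x hst.le (Ioo_subset_Icc_self hx) (hξ s x hx (Ioo_subset_Icc_self hs)).1]
    simp only [Function.comp_apply, Z, sub_sub_cancel]
  · filter_upwards [isOpen_Ioo.mem_nhds hx, hTx.continuousAt.eventually (eventually_gt_nhds htx),
      (hTx.continuousAt.sub continuousAt_const).preimage_mem_nhds (isOpen_Ioo.mem_nhds hTxt)]
      with y hy hty (hTy : T y - t ∈ Ioo (T a) (T b))
    obtain ⟨hξy, hTξy⟩ := hξ t y hy (Ioo_subset_Icc_self hTy)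
    obtain ⟨hZy, hTZy⟩ := hZ _ hTy
    rw [hρ t y hty.le (Ioo_subset_Icc_self hy) hξy, Function.comp_apply,
      hTmono.injOn hξy hZy (hTξy.trans hTZy.symm)]

theorem exists_transport_derivs_behind_front {f g T F : ℝ → ℝ} {ρ : ℝ → ℝ → ℝ} {ε c k t x : ℝ}
    (hfA : HasDerivAt (fun y => f y * Real.exp (-F y)) (-(g x * Real.exp (-F x))) x)
    (hT : HasDerivAt T (ε / f x) x) (hfx : f x ≠ 0)
    (hρ : ∀ s y, T y < s → ρ s y = c * Real.exp (-k * (s - T y)) * Real.exp (-F y))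
    (htx : T x < t) :
    ∃ Dt Dx : ℝ, HasDerivAt (fun s => ρ s x) Dt t ∧ HasDerivAt (fun y => f y * ρ t y) Dx x ∧
      ε * Dt = -Dx - g x * ρ t x := by
  refine exists_transport_derivs (H := fun τ => c * Real.exp (k * τ)) hfA hT hfx
    (((hasDerivAt_id _).const_mul k).exp.const_mul c) ?_ ?_
  · filter_upwards [eventually_gt_nhds htx] with s hs
    rw [hρ s x hs]
    ring_nf
  · filter_upwards [hT.continuousAt.eventually (eventually_lt_nhds htx)] with y hy
    rw [hρ t y hy]
    ring_nf

theorem continuousAt_mul_behind_front {f T F : ℝ → ℝ} {ρ : ℝ → ℝ → ℝ} {c k t x : ℝ}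
    (hf : ContinuousAt f x) (hT : ContinuousAt T x) (hF : ContinuousAt F x)
    (hρ : ∀ s y, T y < s → ρ s y = c * Real.exp (-k * (s - T y)) * Real.exp (-F y))
    (htx : T x < t) : ContinuousAt (fun y => f y * ρ t y) x := by
  have : ContinuousAt (fun y => f y * (c * Real.exp (-k * (t - T y)) * Real.exp (-F y))) x := by
    fun_prop
  exact this.congr (by
    filter_upwards [hT.eventually (eventually_lt_nhds htx)] with y hy
    rw [hρ t y hy])

theorem stmt11_general
    (f g : ℝ → ℝ) (f0 g0 ρ0in ε : ℝ)
    (hfC1 : ContDiff ℝ 1 f) (hfpos : ∀ x ∈ Set.Icc (0 : ℝ) 1, 0 < f x)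
    (hgcont : Continuous g)
    (hε : 0 < ε)
    (ρin : ℝ → ℝ) (hρin : ContDiff ℝ 1 ρin)
    -- X s t x is the characteristic through (t,x) of dX/ds = f(X)/ε
    (X : ℝ → ℝ → ℝ → ℝ)
    (hXinit : ∀ t x : ℝ, X t t x = x)
    (hXode : ∀ s t x : ℝ, HasDerivAt (fun σ => X σ t x) (f (X s t x) / ε) s)
    -- the slow component
    (ρ0 : ℝ → ℝ) (hρ0 : ∀ t, ρ0 t = ρ0in * Real.exp (-(f0 + g0) * t))
    -- the density built by the method of characteristics
    (ρ : ℝ → ℝ → ℝ)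
    (hρ : ∀ t x : ℝ, ρ t x =
      if t ≤ ∫ y in (0 : ℝ)..x, ε / f y then
        Real.exp (-∫ y in (X 0 t x)..x, (g y + deriv f y) / f y) * ρin (X 0 t x)
      else
        (f0 / f 0) * ρ0in
          * Real.exp (-(f0 + g0) * (t - ∫ y in (0 : ℝ)..x, ε / f y))
          * Real.exp (-∫ y in (0 : ℝ)..x, (g y + deriv f y) / f y)) :
    -- initial conditions
    (ρ0 0 = ρ0in ∧ ∀ x ∈ Set.Ioo (0 : ℝ) 1, ρ 0 x = ρin x) ∧
    -- slow equation : dρ₀/dt = -(f₀+g₀) ρ₀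
    (∀ t : ℝ, HasDerivAt ρ0 (-(f0 + g0) * ρ0 t) t) ∧
    -- PDE : ε ∂ₜρ = -∂ₓ(f ρ) - g ρ, for x ∈ (0,1), away from the characteristic
    (∀ t : ℝ, 0 ≤ t → ∀ x ∈ Set.Ioo (0 : ℝ) 1,
      t ≠ ∫ y in (0 : ℝ)..x, ε / f y →
      ∃ Dt Dx : ℝ,
        HasDerivAt (fun s => ρ s x) Dt t ∧
        HasDerivAt (fun y => f y * ρ t y) Dx x ∧
        ε * Dt = -Dx - g x * ρ t x) ∧
    -- boundary condition : lim_{x→0⁺} f(x) ρ(t,x) = f₀ ρ₀(t)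
    (∀ t : ℝ, 0 < t →
      Tendsto (fun x => f x * ρ t x) (nhdsWithin 0 (Set.Ioi 0))
        (nhds (f0 * ρ0 t))) := by
  set T : ℝ → ℝ := fun y => ∫ u in (0 : ℝ)..y, ε / f u
  set q : ℝ → ℝ := fun y => (g y + deriv f y) / f y
  set F : ℝ → ℝ := fun y => ∫ u in (0 : ℝ)..y, q u
  have hf_cont := hfC1.continuous
  have hU : IsOpen {y | 0 < f y} := isOpen_lt continuous_const hf_cont
  have h0 : (0 : ℝ) ∈ Icc 0 1 := left_mem_Icc.2 zero_le_one
  have hfne : ∀ z ∈ Icc (0 : ℝ) 1, f z ≠ 0 := fun z hz => (hfpos z hz).ne'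
  have huIcc : ∀ y ∈ Icc (0 : ℝ) 1, uIcc 0 y ⊆ {y | 0 < f y} := fun y hy =>
    (ordConnected_Icc.uIcc_subset h0 hy).trans hfpos
  have hq : ContinuousOn q {y | 0 < f y} :=
    (hgcont.add (hfC1.continuous_deriv le_rfl)).continuousOn.div hf_cont.continuousOn
      fun _ hy => hy.ne'
  have hT' : ∀ y ∈ Icc (0 : ℝ) 1, HasDerivAt T (ε / f y) y := fun y hy =>
    hasDerivAt_integral_of_continuousOn hU
      (continuousOn_const.div hf_cont.continuousOn fun _ hz => hz.ne') (huIcc y hy)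
  have hF' : ∀ y ∈ Icc (0 : ℝ) 1, HasDerivAt F (q y) y := fun y hy =>
    hasDerivAt_integral_of_continuousOn hU hq (huIcc y hy)
  have hTmono : StrictMonoOn T (Icc 0 1) :=
    strictMonoOn_Icc_of_hasDerivAt_pos hT' fun y hy => div_pos hε (hfpos y hy)
  have hT0 : T 0 = 0 := intervalIntegral.integral_same
  have hρ_ahead : ∀ s y, s ≤ T y → y ∈ Icc (0 : ℝ) 1 → X 0 s y ∈ Icc (0 : ℝ) 1 →
      ρ s y = Real.exp (-F y) * (Real.exp (F (X 0 s y)) * ρin (X 0 s y)) := by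
    intro s y hs hy hξ
    rw [hρ, if_pos hs, ← intervalIntegral.integral_interval_sub_left
      ((hq.mono (huIcc y hy)).intervalIntegrable) ((hq.mono (huIcc _ hξ)).intervalIntegrable),
      ← mul_assoc, ← Real.exp_add, neg_sub, sub_eq_neg_add]
  have hρ_behind : ∀ s y, T y < s →
      ρ s y = f0 / f 0 * ρ0in * Real.exp (-(f0 + g0) * (s - T y)) * Real.exp (-F y) :=
    fun s y hs => by rw [hρ, if_neg hs.not_ge]
  refine ⟨⟨by simp [hρ0], fun x hx => ?_⟩, fun t => ?_, fun t ht x hx htx => ?_, fun t ht => ?_⟩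
  · have hTx : 0 ≤ T x := intervalIntegral.integral_nonneg hx.1.le
      fun u hu => (div_pos hε (hfpos u ⟨hu.1, hu.2.trans hx.2.le⟩)).le
    rw [hρ, if_pos hTx, hXinit, intervalIntegral.integral_same, neg_zero, Real.exp_zero, one_mul]
  · rw [show ρ0 = fun t => ρ0in * Real.exp (-(f0 + g0) * t) from funext hρ0]
    exact (((hasDerivAt_id t).const_mul _).exp.const_mul ρ0in).congr_deriv (by simp only [id]; ring)
  · have hxI := Ioo_subset_Icc_self hx
    have hfA := hasDerivAt_mul_exp_neg (hfC1.differentiable one_ne_zero x).hasDerivAt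
      (hfne x hxI) (hF' x hxI)
    rcases htx.lt_or_gt with htx | htx
    · refine exists_transport_derivs_ahead_of_front hε.ne' hfne hT' hTmono hXinit hXode
        (fun z hz => ((hF' z hz).differentiableAt.exp).mul (hρin.differentiable one_ne_zero z))
        hfA hρ_ahead hx htx ⟨by linarith, ?_⟩
      linarith [hTmono hxI (right_mem_Icc.2 zero_le_one) hx.2]
    · exact exists_transport_derivs_behind_front hfA (hT' x hxI) (hfne x hxI) hρ_behind htx
  · have ht' : T 0 < t := by rwa [hT0]
    have hc := continuousAt_mul_behind_front hf_cont.continuousAt (hT' 0 h0).continuousAt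
      (hF' 0 h0).continuousAt hρ_behind ht'
    convert hc.tendsto.mono_left nhdsWithin_le_nhds using 2
    rw [hρ_behind t 0 ht', hρ0, hT0,
      show F 0 = 0 from intervalIntegral.integral_same, sub_zero, neg_zero, Real.exp_zero, mul_one]
    field_simp [hfne 0 h0]

/-- the pair built by the method of characteristics solves the rescaled
linear ODE–PDE model (away from the characteristic issued from the origin). -/
theorem stmt11
    (f g : ℝ → ℝ) (f0 g0 ρ0in ε : ℝ)
    (hfC1 : ContDiff ℝ 1 f) (hfpos : ∀ x ∈ Set.Icc (0 : ℝ) 1, 0 < f x)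
    (hgcont : Continuous g)
    (hf0 : 0 ≤ f0) (hg0 : 0 ≤ g0) (hρ0in : 0 < ρ0in) (hε : 0 < ε)
    (ρin : ℝ → ℝ) (hρin : ContDiff ℝ 1 ρin)
    -- X s t x is the characteristic through (t,x) of dX/ds = f(X)/ε
    (X : ℝ → ℝ → ℝ → ℝ)
    (hXinit : ∀ t x : ℝ, X t t x = x)
    (hXode : ∀ s t x : ℝ, HasDerivAt (fun σ => X σ t x) (f (X s t x) / ε) s)
    -- the slow component
    (ρ0 : ℝ → ℝ) (hρ0 : ∀ t, ρ0 t = ρ0in * Real.exp (-(f0 + g0) * t))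
    -- the density built by the method of characteristics
    (ρ : ℝ → ℝ → ℝ)
    (hρ : ∀ t x : ℝ, ρ t x =
      if t ≤ ∫ y in (0 : ℝ)..x, ε / f y then
        Real.exp (-∫ y in (X 0 t x)..x, (g y + deriv f y) / f y) * ρin (X 0 t x)
      else
        (f0 / f 0) * ρ0in
          * Real.exp (-(f0 + g0) * (t - ∫ y in (0 : ℝ)..x, ε / f y))
          * Real.exp (-∫ y in (0 : ℝ)..x, (g y + deriv f y) / f y)) :
    -- initial conditions
    (ρ0 0 = ρ0in ∧ ∀ x ∈ Set.Ioo (0 : ℝ) 1, ρ 0 x = ρin x) ∧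
    -- slow equation : dρ₀/dt = -(f₀+g₀) ρ₀
    (∀ t : ℝ, HasDerivAt ρ0 (-(f0 + g0) * ρ0 t) t) ∧
    -- PDE : ε ∂ₜρ = -∂ₓ(f ρ) - g ρ, for x ∈ (0,1), away from the characteristic
    (∀ t : ℝ, 0 ≤ t → ∀ x ∈ Set.Ioo (0 : ℝ) 1,
      t ≠ ∫ y in (0 : ℝ)..x, ε / f y →
      ∃ Dt Dx : ℝ,
        HasDerivAt (fun s => ρ s x) Dt t ∧
        HasDerivAt (fun y => f y * ρ t y) Dx x ∧
        ε * Dt = -Dx - g x * ρ t x) ∧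
    -- boundary condition : lim_{x→0⁺} f(x) ρ(t,x) = f₀ ρ₀(t)
    (∀ t : ℝ, 0 < t →
      Tendsto (fun x => f x * ρ t x) (nhdsWithin 0 (Set.Ioi 0))
        (nhds (f0 * ρ0 t))) :=
  stmt11_general f g f0 g0 ρ0in ε hfC1 hfpos hgcont hε ρin hρin X hXinit hXode ρ0 hρ0 ρ hρ
end

section
/- (Proposition 2) Assume K_{1,0} = K_{2,0} = 0, K_1 ≡ 0, K_2 ≡ 0, f ∈ C^1 positive on (0,1) with f(0) > 0, ∫_0^1 1/f(x) dx < ∞, and ∫_0^1 (g(x)+f'(x))/f(x) dx < ∞. For each ε > 0, let ρ^ε be the characteristic solution of the rescaled linear PDE model with initial data (ρ_0^{in}, ρ^{in}), and let ρ̄(t,x) = (f_0/f(0)) ρ_0^{in} exp(-(f_0+g_0)t) exp( -∫_0^x (g(y)+f'(y))/f(y) dy ). Then for every η > 0, lim_{ε→0} sup_{t > η} sup_{x ∈ (0,1)} | ρ^ε(t,x) - ρ̄(t,x) | = 0. -/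
set_option autoImplicit false

open MeasureTheory

set_option maxHeartbeats 1000000 in
/-- Proposition 2: in the linear case, the characteristic solution of the
rescaled PDE model converges, uniformly on `{t > η} × (0,1)` for every `η > 0`, to the
limit density `ρ̄(t,x) = (f₀/f(0)) ρ₀ⁱⁿ e^{-(f₀+g₀)t} exp(-∫₀ˣ (g+f')/f)` as `ε → 0`. -/
theorem stmt12
    (f g : ℝ → ℝ) (f0 g0 ρ0in : ℝ)
    (hf0 : 0 ≤ f0) (hg0 : 0 ≤ g0) (hρ0in : 0 < ρ0in)
    (hfC1 : ContDiffOn ℝ 1 f (Set.Ioo 0 1))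
    (hfpos : ∀ x ∈ Set.Ioo (0 : ℝ) 1, 0 < f x) (hfzero : 0 < f 0)
    (hint1 : IntervalIntegrable (fun x => 1 / f x) volume 0 1)
    (hint2 : IntervalIntegrable (fun x => (g x + deriv f x) / f x) volume 0 1)
    -- for each ε > 0, `ρ ε` is the characteristic solution of the rescaled linear model;
    -- past the initial layer (t > ∫₀ˣ ε/f) it is given by the explicit formula
    (ρ : ℝ → ℝ → ℝ → ℝ)
    (hρ : ∀ ε : ℝ, 0 < ε → ∀ t x : ℝ, x ∈ Set.Ioo (0 : ℝ) 1 →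
      (∫ y in (0 : ℝ)..x, ε / f y) < t →
      ρ ε t x = (f0 / f 0) * ρ0in
        * Real.exp (-(f0 + g0) * (t - ∫ y in (0 : ℝ)..x, ε / f y))
        * Real.exp (-∫ y in (0 : ℝ)..x, (g y + deriv f y) / f y)) :
    -- conclusion: lim_{ε→0} sup_{t>η} sup_{x∈(0,1)} |ρ^ε(t,x) - ρ̄(t,x)| = 0
    ∀ η : ℝ, 0 < η → ∀ δ : ℝ, 0 < δ → ∃ ε0 : ℝ, 0 < ε0 ∧
      ∀ ε : ℝ, 0 < ε → ε < ε0 → ∀ t : ℝ, η < t → ∀ x ∈ Set.Ioo (0 : ℝ) 1,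
        |ρ ε t x - (f0 / f 0) * ρ0in * Real.exp (-(f0 + g0) * t)
            * Real.exp (-∫ y in (0 : ℝ)..x, (g y + deriv f y) / f y)| < δ := by

  intro η hη δ hδ
  set c := f0 + g0 with hc
  have hcnn : 0 ≤ c := add_nonneg hf0 hg0
  -- integrability on Icc
  have hI1int : IntegrableOn (fun x => 1 / f x) (Set.Icc 0 1) volume := by
    rw [integrableOn_Icc_iff_integrableOn_Ioc]
    exact hint1.1
  have hI2int : IntegrableOn (fun x => (g x + deriv f x) / f x) (Set.Icc 0 1) volume := by
    rw [integrableOn_Icc_iff_integrableOn_Ioc]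
    exact hint2.1
  have huIcc : Set.uIcc (0 : ℝ) 1 = Set.Icc 0 1 := Set.uIcc_of_le zero_le_one
  have hI1cont : ContinuousOn (fun x => ∫ y in (0 : ℝ)..x, 1 / f y) (Set.Icc 0 1) := by
    have := intervalIntegral.continuousOn_primitive_interval (a := (0:ℝ)) (b := 1)
      (f := fun x => 1 / f x) (μ := volume) (by rwa [huIcc])
    rwa [huIcc] at this
  have hI2cont : ContinuousOn
      (fun x => Real.exp (-∫ y in (0 : ℝ)..x, (g y + deriv f y) / f y)) (Set.Icc 0 1) := by
    have h2 : ContinuousOn (fun x => ∫ y in (0 : ℝ)..x, (g y + deriv f y) / f y)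
        (Set.Icc 0 1) := by
      have := intervalIntegral.continuousOn_primitive_interval (a := (0:ℝ)) (b := 1)
        (f := fun x => (g x + deriv f x) / f x) (μ := volume) (by rwa [huIcc])
      rwa [huIcc] at this
    exact Real.continuous_exp.comp_continuousOn h2.neg
  obtain ⟨C, hC⟩ := isCompact_Icc.exists_bound_of_continuousOn hI1cont
  obtain ⟨M, hM⟩ := isCompact_Icc.exists_bound_of_continuousOn hI2cont
  have h01 : (0 : ℝ) ∈ Set.Icc (0 : ℝ) 1 := ⟨le_refl 0, zero_le_one⟩
  have hC0 : 0 ≤ C := le_trans (norm_nonneg _) (hC 0 h01)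
  have hM0 : 0 ≤ M := le_trans (norm_nonneg _) (hM 0 h01)
  set K := (f0 / f 0) * ρ0in * M + 1 with hK
  have hAnn : 0 ≤ (f0 / f 0) * ρ0in :=
    mul_nonneg (div_nonneg hf0 hfzero.le) hρ0in.le
  have hK1 : 1 ≤ K := by
    have := mul_nonneg hAnn hM0
    rw [hK]; linarith
  have hK0 : 0 < K := lt_of_lt_of_le one_pos hK1
  have hD : 0 < c * C + 1 := by positivity
  refine ⟨min (η / (C + 1)) (min (1 / (c * C + 1)) (δ / (2 * K * (c * C + 1)))), ?_, ?_⟩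
  · have h1 : 0 < η / (C + 1) := by positivity
    have h2 : 0 < 1 / (c * C + 1) := by positivity
    have h3 : 0 < δ / (2 * K * (c * C + 1)) := by positivity
    exact lt_min h1 (lt_min h2 h3)
  intro ε hε hεlt t ht x hx
  have hxIcc : x ∈ Set.Icc (0 : ℝ) 1 := ⟨hx.1.le, hx.2.le⟩
  -- properties of I1 x
  set I1 := ∫ y in (0 : ℝ)..x, 1 / f y with hI1
  have hI1nn : 0 ≤ I1 := by
    apply intervalIntegral.integral_nonneg hx.1.le
    intro u hu
    rcases eq_or_lt_of_le hu.1 with h | h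
    · simp [← h]
      positivity
    · have : 0 < f u := hfpos u ⟨h, lt_of_le_of_lt hu.2 hx.2⟩
      positivity
  have hI1C : I1 ≤ C := le_trans (le_abs_self _) (hC x hxIcc)
  -- the layer integral
  have hs : (∫ y in (0 : ℝ)..x, ε / f y) = ε * I1 := by
    rw [hI1, ← intervalIntegral.integral_const_mul]
    congr 1
    ext y
    rw [mul_one_div]
  have hεC1 : ε * (C + 1) < η := by
    have h1 : ε < η / (C + 1) := lt_of_lt_of_le hεlt (min_le_left _ _)
    have h2 : (0 : ℝ) < C + 1 := by linarith
    calc ε * (C + 1) < (η / (C + 1)) * (C + 1) := by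
          exact mul_lt_mul_of_pos_right h1 h2
      _ = η := by field_simp
  have hst : (∫ y in (0 : ℝ)..x, ε / f y) < t := by
    rw [hs]
    have : ε * I1 ≤ ε * (C + 1) := by nlinarith
    linarith
  rw [hρ ε hε t x hx hst, hs]
  set E2 := Real.exp (-∫ y in (0 : ℝ)..x, (g y + deriv f y) / f y) with hE2
  have hE2nn : 0 ≤ E2 := (Real.exp_pos _).le
  have hE2M : E2 ≤ M := by
    have := hM x hxIcc
    rw [Real.norm_eq_abs, abs_of_nonneg hE2nn] at this
    exact this
  set A := (f0 / f 0) * ρ0in with hA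
  clear_value A
  have hdiff : A * Real.exp (-c * (t - ε * I1)) * E2 - A * Real.exp (-c * t) * E2
      = A * Real.exp (-c * t) * E2 * (Real.exp (c * (ε * I1)) - 1) := by
    rw [show -c * (t - ε * I1) = -c * t + c * (ε * I1) by ring, Real.exp_add]
    ring
  rw [hdiff]
  have hcs0 : 0 ≤ c * (ε * I1) := mul_nonneg hcnn (mul_nonneg hε.le hI1nn)
  have hcs1 : c * (ε * I1) ≤ 1 := by
    have h1 : ε < 1 / (c * C + 1) :=
      lt_of_lt_of_le hεlt (le_trans (min_le_right _ _) (min_le_left _ _))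
    have h2 : c * (ε * I1) ≤ (c * C + 1) * ε := by
      nlinarith [mul_le_mul_of_nonneg_left hI1C (mul_nonneg hcnn hε.le)]
    have h3 : (c * C + 1) * ε ≤ 1 := by
      rw [div_eq_mul_inv, one_mul] at h1
      calc (c * C + 1) * ε ≤ (c * C + 1) * (c * C + 1)⁻¹ := by
            exact mul_le_mul_of_nonneg_left h1.le hD.le
        _ = 1 := mul_inv_cancel₀ (ne_of_gt hD)
    linarith
  have hexp : |Real.exp (c * (ε * I1)) - 1| ≤ 2 * (c * (ε * I1)) := by
    have := Real.abs_exp_sub_one_le (x := c * (ε * I1)) (by rw [abs_of_nonneg hcs0]; exact hcs1)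
    rwa [abs_of_nonneg hcs0] at this
  have hexpnn : 0 ≤ Real.exp (c * (ε * I1)) - 1 := by
    have := Real.one_le_exp hcs0
    linarith
  have hexpt : Real.exp (-c * t) ≤ 1 := by
    apply Real.exp_le_one_iff.mpr
    nlinarith
  have habs : |A * Real.exp (-c * t) * E2 * (Real.exp (c * (ε * I1)) - 1)|
      = A * Real.exp (-c * t) * E2 * (Real.exp (c * (ε * I1)) - 1) := by
    apply abs_of_nonneg
    have := (Real.exp_pos (-c * t)).le
    positivity
  rw [habs]
  have hεδ : ε < δ / (2 * K * (c * C + 1)) :=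
    lt_of_lt_of_le hεlt (le_trans (min_le_right _ _) (min_le_right _ _))
  have hfinal : 2 * K * (c * C + 1) * ε < δ := by
    have h2 : 0 < 2 * K * (c * C + 1) := by positivity
    calc 2 * K * (c * C + 1) * ε < 2 * K * (c * C + 1) * (δ / (2 * K * (c * C + 1))) :=
          mul_lt_mul_of_pos_left hεδ h2
      _ = δ := by field_simp
  have hE : Real.exp (c * (ε * I1)) - 1 ≤ 2 * (c * (ε * I1)) := by
    have := le_abs_self (Real.exp (c * (ε * I1)) - 1)
    linarith
  have hexpt0 : 0 ≤ Real.exp (-c * t) := (Real.exp_pos _).le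
  set D := Real.exp (c * (ε * I1)) - 1 with hDdef
  clear_value D
  have hcsC : c * (ε * I1) ≤ (c * C + 1) * ε := by
    nlinarith [mul_le_mul_of_nonneg_left hI1C (mul_nonneg hcnn hε.le)]
  have hD2 : D ≤ 2 * ((c * C + 1) * ε) := by
    have := le_abs_self D
    rw [hDdef]
    linarith [hexp, hcsC]
  have hq1 : A * Real.exp (-c * t) * E2 * D ≤ A * E2 * D := by
    have h1 : A * Real.exp (-c * t) * E2 ≤ A * E2 := by
      nlinarith [mul_nonneg hAnn hE2nn]
    exact mul_le_mul_of_nonneg_right h1 hexpnn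
  have hq2 : A * E2 * D ≤ A * M * D := by
    have h1 : A * E2 ≤ A * M := mul_le_mul_of_nonneg_left hE2M hAnn
    exact mul_le_mul_of_nonneg_right h1 hexpnn
  have hq3 : A * M * D ≤ K * (2 * ((c * C + 1) * ε)) := by
    have hAM : 0 ≤ A * M := mul_nonneg hAnn hM0
    have hAMK : A * M ≤ K := by rw [hK]; linarith
    have h1 : A * M * D ≤ A * M * (2 * ((c * C + 1) * ε)) :=
      mul_le_mul_of_nonneg_left hD2 hAM
    have h2 : A * M * (2 * ((c * C + 1) * ε)) ≤ K * (2 * ((c * C + 1) * ε)) := by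
      apply mul_le_mul_of_nonneg_right hAMK
      positivity
    linarith
  have : K * (2 * ((c * C + 1) * ε)) = 2 * K * (c * C + 1) * ε := by ring
  linarith
end

section
/- Under the assumptions of the linear PDE model (f ∈ C^1 positive with f(0) > 0, ∫_0^1 1/f < ∞, ∫_0^1 (g+f')/f < ∞, f_0, g_0 ≥ 0, ρ_0^{in} > 0), let η > 0 and let ε > 0 be small enough that t > ∫_0^x ε/f(y) dy for all t > η and x ∈ (0,1). Then sup_{t > η} sup_{x ∈ (0,1)} | ρ^ε(t,x) - ρ̄(t,x) | ≤ (f_0/f(0)) ρ_0^{in} ( sup_{x ∈ (0,1)} exp( -∫_0^x (g(y)+f'(y))/f(y) dy ) ) ( exp( (f_0+g_0) ε ∫_0^1 1/f(y) dy ) - 1 ), and the right-hand side tends to 0 as ε → 0. -/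
set_option autoImplicit false

open MeasureTheory Filter

/-!
Along a characteristic, `ρ^ε` is `ρ̄` shifted back in time by `τ(x) = ∫_0^x ε/f`, so
`ρ^ε - ρ̄ = ρ̄ · (exp((f_0+g_0) τ(x)) - 1)`. Since `f > 0`, `0 ≤ τ(x) ≤ ε ∫_0^1 1/f`, and since `t > 0`
the factor `exp(-(f_0+g_0) t)` of `ρ̄` is at most `1`. The supremum over `x` is finite because the
primitive of `(g+f')/f` is continuous on `[0,1]`, and the bound is continuous in `ε` and vanishes at `0`.
-/

section
open Set

lemma ae_restrict_Icc_nonneg_of_forall_Ioo {φ : ℝ → ℝ} {a b : ℝ}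
    (h : ∀ y ∈ Ioo a b, 0 ≤ φ y) : 0 ≤ᵐ[volume.restrict (Icc a b)] φ := by
  rw [← Measure.restrict_congr_set Ioo_ae_eq_Icc]
  exact (ae_restrict_mem measurableSet_Ioo).mono h

lemma intervalIntegral_mem_Icc_of_forall_Ioo_nonneg {φ : ℝ → ℝ} {a b x : ℝ}
    (h : ∀ y ∈ Ioo a b, 0 ≤ φ y) (hφ : IntervalIntegrable φ volume a b) (hx : x ∈ Icc a b) :
    ∫ y in a..x, φ y ∈ Icc 0 (∫ y in a..b, φ y) :=
  ⟨intervalIntegral.integral_nonneg_of_ae_restrict hx.1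
      (ae_restrict_Icc_nonneg_of_forall_Ioo fun y hy => h y ⟨hy.1, hy.2.trans_le hx.2⟩),
    intervalIntegral.integral_mono_interval le_rfl hx.1 hx.2
      (ae_restrict_of_ae_restrict_of_subset Ioc_subset_Icc_self
        (ae_restrict_Icc_nonneg_of_forall_Ioo h)) hφ⟩

lemma bddAbove_exp_neg_primitive_image_Ioo {φ : ℝ → ℝ} {a b : ℝ}
    (hφ : IntervalIntegrable φ volume a b) :
    BddAbove ((fun x => Real.exp (-∫ y in a..x, φ y)) '' Ioo a b) :=
  ((isCompact_uIcc.image_of_continuousOn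
      (Real.continuous_exp.comp_continuousOn
        (intervalIntegral.continuousOn_primitive_interval' hφ left_mem_uIcc).neg)).bddAbove).mono
    (image_mono (Ioo_subset_Icc_self.trans Icc_subset_uIcc))

/-- In `ℝ`, `⨆ y ∈ s, F y` is a supremum over all `y`, taking the junk value `sSup ∅ = 0` at
`y ∉ s`; it stays bounded above by `max M 0`. -/
lemma Real.le_biSup_of_bddAbove {α : Type*} {F : α → ℝ} {s : Set α}
    (hbdd : BddAbove (F '' s)) {x : α} (hx : x ∈ s) :
    F x ≤ ⨆ y ∈ s, F y := by
  obtain ⟨M, hM⟩ := hbdd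
  have hbdd' : BddAbove (range fun y => ⨆ _ : y ∈ s, F y) := by
    refine ⟨max M 0, ?_⟩
    rintro _ ⟨y, rfl⟩
    by_cases hy : y ∈ s
    · simpa only [ciSup_pos hy] using le_max_of_le_left (hM (mem_image_of_mem F hy))
    · simp [hy]
  calc F x = ⨆ _ : x ∈ s, F x := (ciSup_pos (f := fun _ => F x) hx).symm
    _ ≤ ⨆ y ∈ s, F y := le_ciSup hbdd' x

end

lemma abs_exp_neg_mul_sub_shift_sub_le {a t τ T : ℝ} (ha : 0 ≤ a) (ht : 0 ≤ t)
    (hτ : 0 ≤ τ) (hτT : τ ≤ T) :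
    |Real.exp (-a * (t - τ)) - Real.exp (-a * t)| ≤ Real.exp (a * T) - 1 := by
  have hshift : Real.exp (-a * (t - τ)) - Real.exp (-a * t)
      = Real.exp (-a * t) * (Real.exp (a * τ) - 1) := by
    rw [show -a * (t - τ) = -a * t + a * τ by ring, Real.exp_add]
    ring
  have hdecay : Real.exp (-a * t) ≤ 1 := Real.exp_le_one_iff.mpr (by nlinarith)
  have hgrowth : 0 ≤ Real.exp (a * τ) - 1 := by
    linarith [Real.one_le_exp (mul_nonneg ha hτ)]
  rw [hshift, abs_of_nonneg (mul_nonneg (Real.exp_pos _).le hgrowth)]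
  calc Real.exp (-a * t) * (Real.exp (a * τ) - 1) ≤ 1 * (Real.exp (a * τ) - 1) :=
        mul_le_mul_of_nonneg_right hdecay hgrowth
    _ ≤ Real.exp (a * T) - 1 := by
        linarith [Real.exp_le_exp.mpr (mul_le_mul_of_nonneg_left hτT ha)]

theorem stmt13_general
    (f g : ℝ → ℝ) (f0 g0 ρ0in : ℝ)
    (hf0 : 0 ≤ f0) (hg0 : 0 ≤ g0) (hρ0in : 0 < ρ0in)
    (hfpos : ∀ x ∈ Set.Ioo (0 : ℝ) 1, 0 < f x) (hfzero : 0 < f 0)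
    (hint1 : IntervalIntegrable (fun x => 1 / f x) volume 0 1)
    (hint2 : IntervalIntegrable (fun x => (g x + deriv f x) / f x) volume 0 1)
    (η ε : ℝ) (hη : 0 < η) (hε : 0 < ε)
    -- the characteristic solution past the initial layer
    (ρε : ℝ → ℝ → ℝ)
    (hρε : ∀ t x : ℝ, ρε t x = (f0 / f 0) * ρ0in
      * Real.exp (-(f0 + g0) * (t - ∫ y in (0 : ℝ)..x, ε / f y))
      * Real.exp (-∫ y in (0 : ℝ)..x, (g y + deriv f y) / f y))
    -- the limit-model density
    (ρbar : ℝ → ℝ → ℝ)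
    (hρbar : ∀ t x : ℝ, ρbar t x = (f0 / f 0) * ρ0in * Real.exp (-(f0 + g0) * t)
      * Real.exp (-∫ y in (0 : ℝ)..x, (g y + deriv f y) / f y)) :
    -- the uniform bound
    (∀ t : ℝ, η < t → ∀ x ∈ Set.Ioo (0 : ℝ) 1,
      |ρε t x - ρbar t x| ≤ (f0 / f 0) * ρ0in
        * (⨆ x' ∈ Set.Ioo (0 : ℝ) 1,
            Real.exp (-∫ y in (0 : ℝ)..x', (g y + deriv f y) / f y))
        * (Real.exp ((f0 + g0) * ε * ∫ y in (0 : ℝ)..1, 1 / f y) - 1)) ∧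
    -- and the right-hand side tends to 0 as ε → 0
    Tendsto (fun ε' : ℝ => (f0 / f 0) * ρ0in
        * (⨆ x' ∈ Set.Ioo (0 : ℝ) 1,
            Real.exp (-∫ y in (0 : ℝ)..x', (g y + deriv f y) / f y))
        * (Real.exp ((f0 + g0) * ε' * ∫ y in (0 : ℝ)..1, 1 / f y) - 1))
      (nhdsWithin 0 (Set.Ioi 0)) (nhds 0) := by
  refine ⟨fun t ht x hx => ?_,
    ((by fun_prop : Continuous _).tendsto' 0 0 (by simp)).mono_left nhdsWithin_le_nhds⟩
  specialize hρε t x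
  specialize hρbar t x
  set C := (f0 / f 0) * ρ0in
  set F := fun x => Real.exp (-∫ y in (0 : ℝ)..x, (g y + deriv f y) / f y)
  set τ := ∫ y in (0 : ℝ)..x, ε / f y
  have hC : 0 ≤ C := mul_nonneg (div_nonneg hf0 hfzero.le) hρ0in.le
  have hFx : F x ≤ ⨆ x' ∈ Set.Ioo (0 : ℝ) 1, F x' :=
    Real.le_biSup_of_bddAbove (bddAbove_exp_neg_primitive_image_Ioo hint2) hx
  have hK := intervalIntegral_mem_Icc_of_forall_Ioo_nonneg
    (fun y hy => (one_div_pos.mpr (hfpos y hy)).le) hint1 (Set.Ioo_subset_Icc_self hx)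
  have hτ : τ = ε * ∫ y in (0 : ℝ)..x, 1 / f y := by
    simp only [τ, ← intervalIntegral.integral_const_mul, mul_one_div]
  have hshift := abs_exp_neg_mul_sub_shift_sub_le (add_nonneg hf0 hg0) (hη.trans ht).le
    (hτ ▸ mul_nonneg hε.le hK.1) (hτ ▸ mul_le_mul_of_nonneg_left hK.2 hε.le)
  calc |ρε t x - ρbar t x|
      = C * F x * |Real.exp (-(f0 + g0) * (t - τ)) - Real.exp (-(f0 + g0) * t)| := by
        rw [hρε, hρbar, ← abs_of_nonneg (mul_nonneg hC (Real.exp_pos (-_)).le), ← abs_mul]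
        congr 1
        ring
    _ ≤ C * (⨆ x' ∈ Set.Ioo (0 : ℝ) 1, F x')
        * (Real.exp ((f0 + g0) * (ε * ∫ y in (0 : ℝ)..1, 1 / f y)) - 1) := by
        gcongr
        exact mul_nonneg hC ((Real.exp_pos _).le.trans hFx)
    _ = _ := by rw [mul_assoc (f0 + g0)]

/-- quantitative uniform bound between the characteristic solution of the
rescaled linear PDE model (past the initial layer) and the limit density, and vanishing
of this bound as `ε → 0`. -/
theorem stmt13
    (f g : ℝ → ℝ) (f0 g0 ρ0in : ℝ)
    (hf0 : 0 ≤ f0) (hg0 : 0 ≤ g0) (hρ0in : 0 < ρ0in)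
    (hfC1 : ContDiffOn ℝ 1 f (Set.Ioo 0 1))
    (hfpos : ∀ x ∈ Set.Ioo (0 : ℝ) 1, 0 < f x) (hfzero : 0 < f 0)
    (hint1 : IntervalIntegrable (fun x => 1 / f x) volume 0 1)
    (hint2 : IntervalIntegrable (fun x => (g x + deriv f x) / f x) volume 0 1)
    (η ε : ℝ) (hη : 0 < η) (hε : 0 < ε)
    -- ε is small enough that every (t,x) with t > η lies past the initial layer
    (hsmall : ∀ t : ℝ, η < t → ∀ x ∈ Set.Ioo (0 : ℝ) 1,
      (∫ y in (0 : ℝ)..x, ε / f y) < t)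
    -- the characteristic solution past the initial layer
    (ρε : ℝ → ℝ → ℝ)
    (hρε : ∀ t x : ℝ, ρε t x = (f0 / f 0) * ρ0in
      * Real.exp (-(f0 + g0) * (t - ∫ y in (0 : ℝ)..x, ε / f y))
      * Real.exp (-∫ y in (0 : ℝ)..x, (g y + deriv f y) / f y))
    -- the limit-model density
    (ρbar : ℝ → ℝ → ℝ)
    (hρbar : ∀ t x : ℝ, ρbar t x = (f0 / f 0) * ρ0in * Real.exp (-(f0 + g0) * t)
      * Real.exp (-∫ y in (0 : ℝ)..x, (g y + deriv f y) / f y)) :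
    -- the uniform bound
    (∀ t : ℝ, η < t → ∀ x ∈ Set.Ioo (0 : ℝ) 1,
      |ρε t x - ρbar t x| ≤ (f0 / f 0) * ρ0in
        * (⨆ x' ∈ Set.Ioo (0 : ℝ) 1,
            Real.exp (-∫ y in (0 : ℝ)..x', (g y + deriv f y) / f y))
        * (Real.exp ((f0 + g0) * ε * ∫ y in (0 : ℝ)..1, 1 / f y) - 1)) ∧
    -- and the right-hand side tends to 0 as ε → 0
    Tendsto (fun ε' : ℝ => (f0 / f 0) * ρ0in
        * (⨆ x' ∈ Set.Ioo (0 : ℝ) 1,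
            Real.exp (-∫ y in (0 : ℝ)..x', (g y + deriv f y) / f y))
        * (Real.exp ((f0 + g0) * ε' * ∫ y in (0 : ℝ)..1, 1 / f y) - 1))
      (nhdsWithin 0 (Set.Ioi 0)) (nhds 0) :=
  stmt13_general f g f0 g0 ρ0in hf0 hg0 hρ0in hfpos hfzero hint1 hint2 η ε hη hε ρε hρε ρbar hρbar
end

section
/- Let d ∈ ℕ*, f_0,…,f_{d-1} ≥ 0, f_d = 0, g_1,…,g_d ≥ 0 with f_i + g_i > 0 for i = 1,…,d, let x_0 > 0, and set p_i = Π_{j=0}^{i-1} f_j/(f_{j+1}+g_{j+1}). Define the measure f̄ on ℕ^d by f̄(x_1,…,x_d) = Π_{i=1}^d (p_i x_0)^{x_i} e^{-p_i x_0} / x_i! (product of Poisson laws with means p_i x_0), and the generator Ā_{x_0} acting on bounded ψ : ℕ^d → ℝ by Ā_{x_0} ψ(x) = f_0 x_0 [ψ(x+e_1) - ψ(x)] + Σ_{i=1}^d f_i x_i [ψ(x - e_i + e_{i+1}) - ψ(x)] + Σ_{i=1}^d g_i x_i [ψ(x - e_i) - ψ(x)], where e_i is the i-th standard basis vector of ℕ^d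 and e_{d+1} = 0. Then for every bounded ψ : ℕ^d → ℝ, the series Σ_{x ∈ ℕ^d} Ā_{x_0} ψ(x) f̄(x) converges absolutely and equals 0. -/
set_option autoImplicit false

open scoped BigOperators

/-- Add one follicle in compartment `i` (configuration `x + eᵢ`). -/
def addOne {d : ℕ} (x : Fin d → ℕ) (i : Fin d) : Fin d → ℕ :=
  Function.update x i (x i + 1)

/-- Remove one follicle from compartment `i` (configuration `x - eᵢ`). -/
def removeOne {d : ℕ} (x : Fin d → ℕ) (i : Fin d) : Fin d → ℕ :=
  Function.update x i (x i - 1)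

/-- Move one follicle from compartment `i` to compartment `i+1`
(configuration `x - eᵢ + eᵢ₊₁`, with `e_{d+1} = 0`). -/
def moveOne {d : ℕ} (x : Fin d → ℕ) (i : Fin d) : Fin d → ℕ :=
  if h : (i : ℕ) + 1 < d then addOne (removeOne x i) ⟨(i : ℕ) + 1, h⟩
  else removeOne x i

/-- The generator `Ā_{x₀}` of the fast growing-follicle chain, frozen slow variable `x₀`,
applied to a function `ψ` at the configuration `x`. -/
noncomputable def genApply {d : ℕ} [NeZero d] (f g : ℕ → ℝ) (f0 x0 : ℝ)
    (ψ : (Fin d → ℕ) → ℝ) (x : Fin d → ℕ) : ℝ :=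
  f0 * x0 * (ψ (addOne x 0) - ψ x)
    + ∑ i : Fin d, f ((i : ℕ) + 1) * (x i : ℝ) * (ψ (moveOne x i) - ψ x)
    + ∑ i : Fin d, g ((i : ℕ) + 1) * (x i : ℝ) * (ψ (removeOne x i) - ψ x)

/-- The product of Poisson laws with means `pᵢ x₀`. -/
noncomputable def poissonProd {d : ℕ} (p : Fin d → ℝ) (x0 : ℝ) (x : Fin d → ℕ) : ℝ :=
  ∏ i : Fin d, (p i * x0) ^ (x i) * Real.exp (-(p i * x0)) / (Nat.factorial (x i))

/-!
Write `μ` for the product Poisson weights, `λᵢ = pᵢ x₀`, and `K k = ∑_y μ(y) ψ(y + e_k)`, with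
`e_k = 0` for `k ≥ d`, so that `K d = ∑_y μ(y) ψ(y)`. Since `(yᵢ + 1) μ(y + eᵢ) = λᵢ μ(y)`, the
reindexing `x = y + eᵢ` gives `∑_x xᵢ μ(x) F(x - eᵢ) = λᵢ ∑_y μ(y) F(y)`, which turns each term of
`∑_x Ā ψ(x) μ(x)` into a multiple of some `K k`. With the inflows `c 0 = f₀ x₀` and
`c (i + 1) = f_{i+1} λᵢ`, the definition of `pᵢ` is exactly the balance
`(f_{i+1} + g_{i+1}) λᵢ = c i`, and the resulting sum telescopes to `c d (K d - K d) = 0`.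
-/

open Finset

noncomputable def poissonWeight (r : ℝ) (n : ℕ) : ℝ :=
  r ^ n * Real.exp (-r) / n.factorial

theorem summable_norm_poissonWeight (r : ℝ) : Summable fun n => ‖poissonWeight r n‖ := by
  refine ((Real.summable_pow_div_factorial |r|).mul_right (Real.exp (-r))).congr fun n => ?_
  simp only [poissonWeight, norm_div, norm_mul, norm_pow, Real.norm_eq_abs,
    abs_of_pos (Real.exp_pos _), Nat.abs_cast]
  ring

theorem succ_mul_poissonWeight_succ (r : ℝ) (n : ℕ) :
    ((n : ℝ) + 1) * poissonWeight r (n + 1) = r * poissonWeight r n := by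
  simp only [poissonWeight, pow_succ, Nat.factorial_succ, Nat.cast_mul, Nat.cast_succ]
  field_simp

theorem summable_norm_fin_pi_prod {α R : Type*} [NormedCommRing R] :
    ∀ {d : ℕ} (Q : Fin d → α → R), (∀ j, Summable fun a => ‖Q j a‖) →
      Summable fun x : Fin d → α => ‖∏ j, Q j (x j)‖
  | 0, _, _ => .of_finite
  | n + 1, Q, hQ => by
    have htail := summable_norm_fin_pi_prod (fun j : Fin n => Q j.succ) fun j => hQ j.succ
    refine (Fin.consEquiv fun _ => α).summable_iff.mp ((hQ 0).mul_norm htail |>.congr fun ab => ?_)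
    simp [Fin.consEquiv, Fin.prod_univ_succ]

section Moves

variable {d : ℕ}

theorem addOne_self (x : Fin d → ℕ) (i : Fin d) : addOne x i i = x i + 1 :=
  Function.update_self i _ x

theorem removeOne_addOne (x : Fin d → ℕ) (i : Fin d) : removeOne (addOne x i) i = x := by
  simp [removeOne, addOne]

theorem addOne_injective (i : Fin d) : Function.Injective fun x : Fin d → ℕ => addOne x i :=
  Function.LeftInverse.injective (g := fun x => removeOne x i) fun x => removeOne_addOne x i

theorem addOne_removeOne (x : Fin d → ℕ) (i : Fin d) (hx : x i ≠ 0) :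
    addOne (removeOne x i) i = x := by
  simp only [addOne, removeOne, Function.update_self, Function.update_idem]
  rw [Nat.sub_add_cancel (Nat.one_le_iff_ne_zero.mpr hx), Function.update_eq_self]

theorem coord_mul_addOne_removeOne (x : Fin d → ℕ) (i : Fin d) (a : ℝ) (F : (Fin d → ℕ) → ℝ) :
    (x i : ℝ) * a * F (addOne (removeOne x i) i) = x i * a * F x := by
  rcases eq_or_ne (x i) 0 with hx | hx
  · simp [hx]
  · rw [addOne_removeOne x i hx]

/-- `x + e_k`, with the convention `e_k = 0` for `k ≥ d`. -/
def addOneAt (x : Fin d → ℕ) (k : ℕ) : Fin d → ℕ :=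
  if h : k < d then addOne x ⟨k, h⟩ else x

theorem addOneAt_val (x : Fin d → ℕ) (i : Fin d) : addOneAt x i = addOne x i :=
  dif_pos i.isLt

theorem addOneAt_zero [NeZero d] (x : Fin d → ℕ) : addOneAt x 0 = addOne x 0 := by
  simpa using addOneAt_val x 0

theorem addOneAt_dim (x : Fin d → ℕ) : addOneAt x d = x :=
  dif_neg (lt_irrefl d)

theorem moveOne_eq_addOneAt_removeOne (x : Fin d → ℕ) (i : Fin d) :
    moveOne x i = addOneAt (removeOne x i) (i + 1) := rfl

end Moves

section PoissonProd

variable {d : ℕ} (p : Fin d → ℝ) (x0 : ℝ)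

theorem poissonProd_eq_prod_poissonWeight (x : Fin d → ℕ) :
    poissonProd p x0 x = ∏ i, poissonWeight (p i * x0) (x i) := rfl

theorem summable_norm_poissonProd : Summable fun x => ‖poissonProd p x0 x‖ :=
  summable_norm_fin_pi_prod (fun i => poissonWeight (p i * x0)) fun _ =>
    summable_norm_poissonWeight _

theorem summable_poissonProd_mul_of_abs_le {F : (Fin d → ℕ) → ℝ} {C : ℝ}
    (hF : ∀ x, |F x| ≤ C) : Summable fun x => poissonProd p x0 x * F x :=
  .of_norm_bounded ((summable_norm_poissonProd p x0).mul_right C) fun x => by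
    rw [norm_mul, Real.norm_eq_abs (F x)]
    exact mul_le_mul_of_nonneg_left (hF x) (norm_nonneg _)

theorem poissonProd_addOne (y : Fin d → ℕ) (i : Fin d) :
    ((y i : ℝ) + 1) * poissonProd p x0 (addOne y i) = p i * x0 * poissonProd p x0 y := by
  have hrest : ∀ j ∈ ({i}ᶜ : Finset (Fin d)),
      poissonWeight (p j * x0) (addOne y i j) = poissonWeight (p j * x0) (y j) := fun j hj => by
    rw [addOne, Function.update_of_ne (by simpa using hj)]
  rw [poissonProd_eq_prod_poissonWeight, poissonProd_eq_prod_poissonWeight,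
    Fintype.prod_eq_mul_prod_compl i, Fintype.prod_eq_mul_prod_compl i, prod_congr rfl hrest,
    addOne_self, ← mul_assoc, succ_mul_poissonWeight_succ, mul_assoc]

theorem hasSum_coord_mul_poissonProd_removeOne (i : Fin d)
    {F : (Fin d → ℕ) → ℝ} {s : ℝ} (h : HasSum (fun y => poissonProd p x0 y * F y) s) :
    HasSum (fun x => (x i : ℝ) * poissonProd p x0 x * F (removeOne x i)) (p i * x0 * s) := by
  refine ((addOne_injective i).hasSum_iff fun x hx => ?_).mp ?_
  · have hxi : x i = 0 := by
      by_contra hne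
      exact hx ⟨removeOne x i, addOne_removeOne x i hne⟩
    simp [hxi]
  · refine (h.mul_left (p i * x0)).congr_fun fun y => ?_
    simp only [Function.comp_apply, addOne_self, removeOne_addOne, Nat.cast_succ]
    rw [poissonProd_addOne, mul_assoc]

end PoissonProd

section ShiftedMeans

variable {d : ℕ} (p : Fin d → ℝ) (x0 : ℝ) {ψ : (Fin d → ℕ) → ℝ} {C : ℝ}

noncomputable def poissonShiftedMean (ψ : (Fin d → ℕ) → ℝ) (k : ℕ) : ℝ :=
  ∑' y, poissonProd p x0 y * ψ (addOneAt y k)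

theorem hasSum_poissonShiftedMean (hψ : ∀ x, |ψ x| ≤ C) (k : ℕ) :
    HasSum (fun y => poissonProd p x0 y * ψ (addOneAt y k)) (poissonShiftedMean p x0 ψ k) :=
  (summable_poissonProd_mul_of_abs_le p x0 fun y => hψ (addOneAt y k)).hasSum

theorem hasSum_coord_mul_poissonProd_shift (hψ : ∀ x, |ψ x| ≤ C) (i : Fin d) (k : ℕ) :
    HasSum (fun x => (x i : ℝ) * poissonProd p x0 x * ψ (addOneAt (removeOne x i) k))
      (p i * x0 * poissonShiftedMean p x0 ψ k) :=
  hasSum_coord_mul_poissonProd_removeOne p x0 i (F := fun y => ψ (addOneAt y k))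
    (hasSum_poissonShiftedMean p x0 hψ k)

theorem hasSum_genApply_mul_poissonProd [NeZero d] (f g : ℕ → ℝ) (f0 : ℝ)
    (hψ : ∀ x, |ψ x| ≤ C) :
    HasSum (fun x => genApply f g f0 x0 ψ x * poissonProd p x0 x)
      (f0 * x0 * (poissonShiftedMean p x0 ψ 0 - poissonShiftedMean p x0 ψ d)
        + ∑ i : Fin d,
          (f (i + 1) * (p i * x0 * poissonShiftedMean p x0 ψ (i + 1)
              - p i * x0 * poissonShiftedMean p x0 ψ i)
            + g (i + 1) * (p i * x0 * poissonShiftedMean p x0 ψ d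
              - p i * x0 * poissonShiftedMean p x0 ψ i))) := by
  have hK := hasSum_poissonShiftedMean p x0 hψ
  have hT := hasSum_coord_mul_poissonProd_shift p x0 hψ
  refine ((((hK 0).sub (hK d)).mul_left (f0 * x0)).add <| hasSum_sum (s := univ) fun i _ =>
    (((hT i (i + 1)).sub (hT i i)).mul_left (f (i + 1))).add
      (((hT i d).sub (hT i i)).mul_left (g (i + 1)))).congr_fun fun x => ?_
  simp only [← moveOne_eq_addOneAt_removeOne, addOneAt_zero, addOneAt_dim, addOneAt_val,
    coord_mul_addOne_removeOne, genApply, add_mul, sum_mul]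
  rw [add_assoc, ← sum_add_distrib]
  congr 1
  · ring
  · exact sum_congr rfl fun i _ => by ring

end ShiftedMeans

theorem telescoping_flux_sum_range_eq_zero (c K : ℕ → ℝ) (d : ℕ) :
    c 0 * (K 0 - K d)
      + ∑ i ∈ range d, (c (i + 1) * (K (i + 1) - K i) + (c i - c (i + 1)) * (K d - K i)) = 0 := by
  have hterm : ∀ i ∈ range d,
      c (i + 1) * (K (i + 1) - K i) + (c i - c (i + 1)) * (K d - K i)
        = c (i + 1) * (K (i + 1) - K d) - c i * (K i - K d) := fun i _ => by ring
  rw [sum_congr rfl hterm, sum_range_sub (fun i => c i * (K i - K d))]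
  ring

theorem flux_sum_eq_zero (f g K : ℕ → ℝ) (x0 : ℝ) {d : ℕ} (p : Fin d → ℝ)
    (hfg : ∀ i, 1 ≤ i → i ≤ d → 0 < f i + g i)
    (hp : ∀ i : Fin d, p i = ∏ j ∈ range ((i : ℕ) + 1), f j / (f (j + 1) + g (j + 1))) :
    f 0 * x0 * (K 0 - K d)
      + ∑ i : Fin d, (f (i + 1) * (p i * x0 * K (i + 1) - p i * x0 * K i)
        + g (i + 1) * (p i * x0 * K d - p i * x0 * K i)) = 0 := by
  set c : ℕ → ℝ := fun k => f k * x0 * ∏ j ∈ range k, f j / (f (j + 1) + g (j + 1))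
  have hinflow : ∀ i : Fin d, f (i + 1) * (p i * x0) = c (i + 1) := fun i => by
    simp only [c, hp i]
    ring
  have hbalance : ∀ i : Fin d, (f (i + 1) + g (i + 1)) * (p i * x0) = c i := fun i => by
    have hne := (hfg (i + 1) le_add_self i.isLt).ne'
    simp only [c, hp i, prod_range_succ]
    field_simp
  rw [← telescoping_flux_sum_range_eq_zero c K d, ← Fin.sum_univ_eq_sum_range
    (fun i => c (i + 1) * (K (i + 1) - K i) + (c i - c (i + 1)) * (K d - K i))]
  congr 1
  · simp [c]
  · refine sum_congr rfl fun i _ => ?_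
    linear_combination (K (i + 1) - K d) * hinflow i + (K d - K i) * hbalance i

theorem stmt14_general
    (d : ℕ) [NeZero d] (f g : ℕ → ℝ) (x0 : ℝ)
    (hfg : ∀ i, 1 ≤ i → i ≤ d → 0 < f i + g i)
    (p : Fin d → ℝ)
    (hp : ∀ i : Fin d, p i = ∏ j ∈ Finset.range ((i : ℕ) + 1),
      f j / (f (j + 1) + g (j + 1))) :
    ∀ ψ : (Fin d → ℕ) → ℝ, (∃ C : ℝ, ∀ x, |ψ x| ≤ C) →
      Summable (fun x : Fin d → ℕ => genApply f g (f 0) x0 ψ x * poissonProd p x0 x) ∧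
      ∑' x : Fin d → ℕ, genApply f g (f 0) x0 ψ x * poissonProd p x0 x = 0 := by
  rintro ψ ⟨C, hψ⟩
  have h := hasSum_genApply_mul_poissonProd p x0 f g (f 0) hψ
  rw [flux_sum_eq_zero f g (poissonShiftedMean p x0 ψ) x0 p hfg hp] at h
  exact ⟨h.summable, h.tsum_eq⟩

/-- the product Poisson measure with means `pᵢ x₀` is stationary for the
generator of the fast linear chain: for every bounded `ψ`, `∑_x Ā_{x₀}ψ(x) f̄(x)`
converges absolutely and equals `0`. -/
theorem stmt14
    (d : ℕ) [NeZero d] (f g : ℕ → ℝ) (x0 : ℝ)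
    (hf : ∀ j, j ≤ d - 1 → 0 ≤ f j) (hfd : f d = 0)
    (hg : ∀ i, 1 ≤ i → i ≤ d → 0 ≤ g i)
    (hfg : ∀ i, 1 ≤ i → i ≤ d → 0 < f i + g i)
    (hx0 : 0 < x0)
    (p : Fin d → ℝ)
    (hp : ∀ i : Fin d, p i = ∏ j ∈ Finset.range ((i : ℕ) + 1),
      f j / (f (j + 1) + g (j + 1))) :
    ∀ ψ : (Fin d → ℕ) → ℝ, (∃ C : ℝ, ∀ x, |ψ x| ≤ C) →
      Summable (fun x : Fin d → ℕ => genApply f g (f 0) x0 ψ x * poissonProd p x0 x) ∧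
      ∑' x : Fin d → ℕ, genApply f g (f 0) x0 ψ x * poissonProd p x0 x = 0 :=
  stmt14_general d f g x0 hfg p hp
end
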